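/- arXiv:math/0204128 — 12 statements merged into one kernel-verified Lean document; each statement's English description precedes it below -/
import Mathlib

section
/- If P₁ is a subposet of P (P₁ ⊆ P with the induced order) and P₁ is not sub-representable, then P is not sub-representable. -/
def SubRepresentable (α : Type*) [PartialOrder α] : Prop :=
  ∃ g : Set α → Set α,
    (∀ P₁ P₂ : Set α, Nonempty (↥P₁ ↪o ↥P₂) ↔ g P₁ ⊆ g P₂) ∧
    ∀ P₁ : Set α, Nonempty (↥P₁ ↪o ↥(g P₁)) ∧ Nonempty (↥(g P₁) ↪o ↥P₁)

/-- The image of a set under an order embedding is order-isomorphic to the set. -/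
noncomputable def imgIso {α β : Type*} [PartialOrder α] [PartialOrder β]
    (f : α ↪o β) (T : Set α) : ↥T ≃o ↥(f '' T) where
  toEquiv := Equiv.Set.image f T f.injective
  map_rel_iff' := by
    intro a b
    simp only [Equiv.Set.image, Equiv.Set.imageOfInjOn, Equiv.coe_fn_mk, Subtype.mk_le_mk, f.le_iff_le, Subtype.coe_le_coe]

theorem subrep_of_subset (α : Type*) [PartialOrder α] (S : Set α)
    (h : ¬ SubRepresentable ↥S) : ¬ SubRepresentable α := by
  rintro ⟨g, hg1, hg2⟩
  apply h
  obtain ⟨e⟩ := (hg2 S).2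
  -- iso between T : Set ↥S and its image in α
  have isoA : ∀ T : Set ↥S, ↥T ≃o ↥(Subtype.val '' T : Set α) :=
    fun T => imgIso (OrderEmbedding.subtype _) T
  -- g of the image of any T is contained in g S
  have hsub : ∀ T : Set ↥S, g (Subtype.val '' T) ⊆ g S := by
    intro T
    refine (hg1 _ _).1 ⟨?_⟩
    exact ((isoA T).symm.toOrderEmbedding).trans (OrderEmbedding.subtype _)
  -- but we use val : ↥(g S) → α, so need B ⊆ g S.
  have isoPre : ∀ B : Set α, B ⊆ g S → Nonempty (↥(Subtype.val ⁻¹' B : Set ↥(g S)) ≃o ↥B) := by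
    intro B hB
    refine ⟨(imgIso (OrderEmbedding.subtype _) _).trans (OrderIso.setCongr _ _ ?_)⟩
    show Subtype.val '' (Subtype.val ⁻¹' B) = B
    rw [Subtype.image_preimage_coe]
    exact Set.inter_eq_right.mpr hB
  refine ⟨fun T => e '' (Subtype.val ⁻¹' (g (Subtype.val '' T))), ?_, ?_⟩
  · intro T₁ T₂
    have key : Nonempty (↥T₁ ↪o ↥T₂) ↔
        g (Subtype.val '' T₁) ⊆ g (Subtype.val '' T₂) := by
      rw [← hg1]
      constructor
      · rintro ⟨f⟩
        exact ⟨((isoA T₁).symm.toOrderEmbedding.trans f).trans (isoA T₂).toOrderEmbedding⟩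
      · rintro ⟨f⟩
        exact ⟨((isoA T₁).toOrderEmbedding.trans f).trans (isoA T₂).symm.toOrderEmbedding⟩
    rw [key, Set.image_subset_image_iff e.injective,
      Set.preimage_subset_preimage_iff]
    rw [Subtype.range_coe]
    exact hsub T₁
  · intro T
    -- ↥(h T) ≃o ↥(g (val '' T))
    obtain ⟨i⟩ := isoPre (g (Subtype.val '' T)) (hsub T)
    have j : ↥(Subtype.val ⁻¹' (g (Subtype.val '' T)) : Set ↥(g S)) ≃o
        ↥(e '' (Subtype.val ⁻¹' (g (Subtype.val '' T)))) :=
      imgIso e _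
    obtain ⟨f₁⟩ := (hg2 (Subtype.val '' T)).1
    obtain ⟨f₂⟩ := (hg2 (Subtype.val '' T)).2
    constructor
    · exact ⟨(((isoA T).toOrderEmbedding.trans f₁).trans i.symm.toOrderEmbedding).trans j.toOrderEmbedding⟩
    · exact ⟨((j.symm.toOrderEmbedding.trans i.toOrderEmbedding).trans f₂).trans (isoA T).symm.toOrderEmbedding⟩
end

section
/- Every poset with at most three points is sub-representable. -/
section Aux

variable {α : Type*} [PartialOrder α]

/-- `P` contains a strictly comparable pair. -/
def myHasC (P : Set α) : Prop := ∃ x ∈ P, ∃ y ∈ P, x < y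

/-- `P` contains an incomparable pair. -/
def myHasI (P : Set α) : Prop := ∃ x ∈ P, ∃ y ∈ P, ¬ x ≤ y ∧ ¬ y ≤ x

lemma myHasC_mono {P Q : Set α} (h : P ⊆ Q) (hc : myHasC P) : myHasC Q := by
  obtain ⟨x, hx, y, hy, hxy⟩ := hc
  exact ⟨x, h hx, y, h hy, hxy⟩

lemma myHasI_mono {P Q : Set α} (h : P ⊆ Q) (hc : myHasI P) : myHasI Q := by
  obtain ⟨x, hx, y, hy, hxy⟩ := hc
  exact ⟨x, h hx, y, h hy, hxy⟩

lemma myHasC_two [Finite α] {P : Set α} (hc : myHasC P) : 2 ≤ P.ncard := by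
  obtain ⟨x, hx, y, hy, hxy⟩ := hc
  exact (Set.one_lt_ncard (Set.toFinite P)).2 ⟨x, hx, y, hy, hxy.ne⟩

lemma myHasI_two [Finite α] {P : Set α} (hc : myHasI P) : 2 ≤ P.ncard := by
  obtain ⟨x, hx, y, hy, h1, _⟩ := hc
  exact (Set.one_lt_ncard (Set.toFinite P)).2
    ⟨x, hx, y, hy, fun hxy => h1 (hxy ▸ le_rfl)⟩

lemma two_hasI [Finite α] {Q : Set α} (h2 : Q.ncard = 2) (hc : ¬ myHasC Q) : myHasI Q := by
  obtain ⟨a, b, hab, rfl⟩ := Set.ncard_eq_two.1 h2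
  refine ⟨a, by simp, b, by simp, ?_, ?_⟩ <;> intro hle
  · exact hc ⟨a, by simp, b, by simp, lt_of_le_of_ne hle hab⟩
  · exact hc ⟨b, by simp, a, by simp, lt_of_le_of_ne hle hab.symm⟩

lemma two_not_both [Finite α] {Q : Set α} (h2 : Q.ncard = 2) (hc : myHasC Q)
    (hi : myHasI Q) : False := by
  obtain ⟨a, b, hab, rfl⟩ := Set.ncard_eq_two.1 h2
  obtain ⟨x, hx, y, hy, hlt⟩ := hc
  obtain ⟨s, hs, t, ht, hst1, hst2⟩ := hi
  simp only [Set.mem_insert_iff, Set.mem_singleton_iff] at hx hy hs ht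
  rcases hx with rfl | rfl <;> rcases hy with rfl | rfl <;>
    rcases hs with rfl | rfl <;> rcases ht with rfl | rfl <;>
    first
      | exact hlt.ne rfl
      | exact hst1 le_rfl
      | exact hst2 le_rfl
      | exact hst1 hlt.le
      | exact hst2 hlt.le

lemma chain_pair {x y : α} (hxy : x < y) : ¬ myHasI ({x, y} : Set α) := by
  rintro ⟨s, hs, t, ht, h1, h2⟩
  simp only [Set.mem_insert_iff, Set.mem_singleton_iff] at hs ht
  rcases hs with rfl | rfl <;> rcases ht with rfl | rfl
  · exact h1 le_rfl
  · exact h1 hxy.le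
  · exact h2 hxy.le
  · exact h1 le_rfl

lemma anti_pair {u v : α} (h1 : ¬ u ≤ v) (h2 : ¬ v ≤ u) : ¬ myHasC ({u, v} : Set α) := by
  rintro ⟨s, hs, t, ht, hlt⟩
  simp only [Set.mem_insert_iff, Set.mem_singleton_iff] at hs ht
  rcases hs with rfl | rfl <;> rcases ht with rfl | rfl
  · exact hlt.ne rfl
  · exact h1 hlt.le
  · exact h2 hlt.le
  · exact hlt.ne rfl

lemma card_le3 [Finite α] (h : Nat.card α ≤ 3) (P : Set α) : P.ncard ≤ 3 :=
  le_trans (Set.ncard_le_ncard (Set.subset_univ P) Set.finite_univ)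
    (by rw [Set.ncard_univ]; exact h)

lemma eq_univ_of_three [Finite α] (h : Nat.card α ≤ 3) {P : Set α}
    (h3 : 3 ≤ P.ncard) : P = Set.univ :=
  Set.eq_of_subset_of_ncard_le (Set.subset_univ P)
    (le_trans (by rw [Set.ncard_univ]; exact h) h3) (Set.toFinite _)

lemma pair_hom {Q : Set α} {x y u v : α}
    (hxy : x ≠ y) (hu : u ∈ Q) (hv : v ∈ Q)
    (h1 : x ≤ y ↔ u ≤ v) (h2 : y ≤ x ↔ v ≤ u) :
    Nonempty (↥({x, y} : Set α) ↪o ↥Q) := by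
  classical
  refine ⟨OrderEmbedding.ofMapLEIff
    (fun z => if (z : α) = x then (⟨u, hu⟩ : ↥Q) else ⟨v, hv⟩) ?_⟩
  rintro ⟨a, ha⟩ ⟨b, hb⟩
  simp only [Set.mem_insert_iff, Set.mem_singleton_iff] at ha hb
  rcases ha with rfl | rfl <;> rcases hb with rfl | rfl <;>
    simp [hxy, hxy.symm, Subtype.mk_le_mk, h1, h2]

lemma embed_iff [Finite α] (h : Nat.card α ≤ 3) (P Q : Set α) :
    Nonempty (↥P ↪o ↥Q) ↔
      (P.ncard ≤ Q.ncard ∧ (myHasC P → myHasC Q) ∧ (myHasI P → myHasI Q)) := by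
  constructor
  · rintro ⟨e⟩
    refine ⟨?_, ?_, ?_⟩
    · rw [← Nat.card_coe_set_eq, ← Nat.card_coe_set_eq]
      exact Nat.card_le_card_of_injective e e.injective
    · rintro ⟨x, hx, y, hy, hlt⟩
      exact ⟨e ⟨x, hx⟩, (e ⟨x, hx⟩).2, e ⟨y, hy⟩, (e ⟨y, hy⟩).2,
        Subtype.coe_lt_coe.2 (e.lt_iff_lt.2 (Subtype.mk_lt_mk.2 hlt))⟩
    · rintro ⟨x, hx, y, hy, h1, h2⟩
      refine ⟨e ⟨x, hx⟩, (e ⟨x, hx⟩).2, e ⟨y, hy⟩, (e ⟨y, hy⟩).2, ?_, ?_⟩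
      · exact fun hle => h1 (e.le_iff_le.1 (Subtype.coe_le_coe.1 hle))
      · exact fun hle => h2 (e.le_iff_le.1 (Subtype.coe_le_coe.1 hle))
  · rintro ⟨hn, hc, hi⟩
    have hP3 : P.ncard ≤ 3 := card_le3 h P
    by_cases e0 : P.ncard = 0
    · have hP : P = ∅ := (Set.ncard_eq_zero (Set.toFinite P)).1 e0
      subst hP
      exact ⟨RelEmbedding.ofIsEmpty _ _⟩
    by_cases e1 : P.ncard = 1
    · obtain ⟨a, rfl⟩ := Set.ncard_eq_one.1 e1
      have hQne : Q.Nonempty := Set.nonempty_of_ncard_ne_zero (by omega)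
      obtain ⟨q, hq⟩ := hQne
      refine ⟨OrderEmbedding.ofMapLEIff (fun _ => (⟨q, hq⟩ : ↥Q)) ?_⟩
      intro s t
      have : s = t := Subsingleton.elim s t
      subst this
      simp
    by_cases e2 : P.ncard = 2
    · obtain ⟨a, b, hab, rfl⟩ := Set.ncard_eq_two.1 e2
      by_cases hab1 : a ≤ b
      · have hlt : a < b := lt_of_le_of_ne hab1 hab
        obtain ⟨u, hu, v, hv, huv⟩ := hc ⟨a, by simp, b, by simp, hlt⟩
        exact pair_hom hab hu hv (iff_of_true hab1 huv.le)
          (iff_of_false (fun hle => hab (le_antisymm hab1 hle)) huv.not_ge)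
      · by_cases hab2 : b ≤ a
        · have hlt : b < a := lt_of_le_of_ne hab2 (Ne.symm hab)
          obtain ⟨u, hu, v, hv, huv⟩ := hc ⟨b, by simp, a, by simp, hlt⟩
          exact pair_hom hab hv hu (iff_of_false hab1 huv.not_ge)
            (iff_of_true hab2 huv.le)
        · obtain ⟨u, hu, v, hv, h1, h2⟩ := hi ⟨a, by simp, b, by simp, hab1, hab2⟩
          exact pair_hom hab hu hv (iff_of_false hab1 h1) (iff_of_false hab2 h2)
    · have e3 : P.ncard = 3 := by omega
      have hQ3 : Q.ncard = 3 := le_antisymm (card_le3 h Q) (e3 ▸ hn)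
      have hP : P = Set.univ := eq_univ_of_three h e3.ge
      have hQ : Q = Set.univ := eq_univ_of_three h hQ3.ge
      subst hP; subst hQ
      exact ⟨(OrderIso.refl _).toOrderEmbedding⟩

lemma construct [Finite α] (h : Nat.card α ≤ 3)
    (p : α) (SC SA : Set α)
    (hSC : myHasC (Set.univ : Set α) →
      SC.ncard = 2 ∧ myHasC SC ∧ ¬ myHasI SC ∧ p ∈ SC)
    (hSA : myHasI (Set.univ : Set α) →
      SA.ncard = 2 ∧ myHasI SA ∧ ¬ myHasC SA ∧ p ∈ SA) :
    SubRepresentable α := by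
  classical
  set g : Set α → Set α := fun P =>
    if P.ncard = 0 then ∅
    else if P.ncard = 1 then {p}
    else if P.ncard = 2 then (if myHasC P then SC else SA) else Set.univ
    with hg
  have gdef : ∀ P : Set α,
      (P.ncard = 0 ∧ g P = ∅) ∨ (P.ncard = 1 ∧ g P = {p}) ∨
      (P.ncard = 2 ∧ myHasC P ∧ g P = SC) ∨
      (P.ncard = 2 ∧ myHasI P ∧ ¬ myHasC P ∧ g P = SA) ∨
      (P = Set.univ ∧ P.ncard = 3 ∧ g P = Set.univ) := by
    intro P
    have h3 : P.ncard ≤ 3 := card_le3 h P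
    by_cases e0 : P.ncard = 0
    · exact Or.inl ⟨e0, by simp only [hg]; rw [if_pos e0]⟩
    by_cases e1 : P.ncard = 1
    · exact Or.inr (Or.inl ⟨e1, by simp only [hg]; rw [if_neg e0, if_pos e1]⟩)
    by_cases e2 : P.ncard = 2
    · by_cases ec : myHasC P
      · exact Or.inr (Or.inr (Or.inl ⟨e2, ec, by simp only [hg]; rw [if_neg e0, if_neg e1, if_pos e2, if_pos ec]⟩))
      · exact Or.inr (Or.inr (Or.inr (Or.inl
          ⟨e2, two_hasI e2 ec, ec, by simp only [hg]; rw [if_neg e0, if_neg e1, if_pos e2, if_neg ec]⟩)))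
    · have e3 : P.ncard = 3 := by omega
      exact Or.inr (Or.inr (Or.inr (Or.inr
        ⟨eq_univ_of_three h e3.ge, e3, by simp only [hg]; rw [if_neg e0, if_neg e1, if_neg e2]⟩)))
  have ginv : ∀ P : Set α, (g P).ncard = P.ncard ∧
      (myHasC (g P) ↔ myHasC P) ∧ (myHasI (g P) ↔ myHasI P) := by
    intro P
    rcases gdef P with ⟨e, hgP⟩ | ⟨e, hgP⟩ | ⟨e, ec, hgP⟩ | ⟨e, ei, ec, hgP⟩ |
      ⟨hu, e, hgP⟩ <;> rw [hgP]
    · refine ⟨by simp [e], ?_, ?_⟩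
      · exact iff_of_false (fun hc => by have := myHasC_two hc; simp at this)
          (fun hc => by have := myHasC_two hc; omega)
      · exact iff_of_false (fun hc => by have := myHasI_two hc; simp at this)
          (fun hc => by have := myHasI_two hc; omega)
    · refine ⟨by simp [e], ?_, ?_⟩
      · exact iff_of_false
          (fun hc => by have := myHasC_two hc; simp [Set.ncard_singleton] at this)
          (fun hc => by have := myHasC_two hc; omega)
      · exact iff_of_false
          (fun hc => by have := myHasI_two hc; simp [Set.ncard_singleton] at this)
          (fun hc => by have := myHasI_two hc; omega)
    · obtain ⟨hc2, hcC, hcI, hcp⟩ := hSC (myHasC_mono (Set.subset_univ P) ec)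
      refine ⟨by rw [hc2, e], iff_of_true hcC ec, iff_of_false hcI ?_⟩
      exact fun hi => two_not_both e ec hi
    · obtain ⟨ha2, haI, haC, hap⟩ := hSA (myHasI_mono (Set.subset_univ P) ei)
      exact ⟨by rw [ha2, e], iff_of_false haC ec, iff_of_true haI ei⟩
    · subst hu
      exact ⟨rfl, Iff.rfl, Iff.rfl⟩
  have hmain : ∀ P Q : Set α,
      (P.ncard ≤ Q.ncard ∧ (myHasC P → myHasC Q) ∧ (myHasI P → myHasI Q)) ↔
        g P ⊆ g Q := by
    intro P Q
    constructor
    · rintro ⟨hn, hc, hi⟩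
      rcases gdef P with ⟨eP, hgP⟩ | ⟨eP, hgP⟩ | ⟨eP, ecP, hgP⟩ |
        ⟨eP, eiP, ecP, hgP⟩ | ⟨huP, eP, hgP⟩
      · rw [hgP]; exact Set.empty_subset _
      · rw [hgP]
        rcases gdef Q with ⟨eQ, hgQ⟩ | ⟨eQ, hgQ⟩ | ⟨eQ, ecQ, hgQ⟩ |
          ⟨eQ, eiQ, ecQ, hgQ⟩ | ⟨huQ, eQ, hgQ⟩
        · omega
        · rw [hgQ]
        · rw [hgQ]
          exact Set.singleton_subset_iff.2
            (hSC (myHasC_mono (Set.subset_univ Q) ecQ)).2.2.2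
        · rw [hgQ]
          exact Set.singleton_subset_iff.2
            (hSA (myHasI_mono (Set.subset_univ Q) eiQ)).2.2.2
        · rw [hgQ]; exact Set.subset_univ _
      · rw [hgP]
        have hCQ : myHasC Q := hc ecP
        rcases gdef Q with ⟨eQ, hgQ⟩ | ⟨eQ, hgQ⟩ | ⟨eQ, ecQ, hgQ⟩ |
          ⟨eQ, eiQ, ecQ, hgQ⟩ | ⟨huQ, eQ, hgQ⟩
        · have := myHasC_two hCQ; omega
        · have := myHasC_two hCQ; omega
        · rw [hgQ]
        · exact absurd hCQ ecQ
        · rw [hgQ]; exact Set.subset_univ _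
      · rw [hgP]
        have hIQ : myHasI Q := hi eiP
        rcases gdef Q with ⟨eQ, hgQ⟩ | ⟨eQ, hgQ⟩ | ⟨eQ, ecQ, hgQ⟩ |
          ⟨eQ, eiQ, ecQ, hgQ⟩ | ⟨huQ, eQ, hgQ⟩
        · have := myHasI_two hIQ; omega
        · have := myHasI_two hIQ; omega
        · exact absurd (two_not_both eQ ecQ hIQ) not_false
        · rw [hgQ]
        · rw [hgQ]; exact Set.subset_univ _
      · rw [hgP]
        rcases gdef Q with ⟨eQ, hgQ⟩ | ⟨eQ, hgQ⟩ | ⟨eQ, ecQ, hgQ⟩ |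
          ⟨eQ, eiQ, ecQ, hgQ⟩ | ⟨huQ, eQ, hgQ⟩
        · omega
        · omega
        · omega
        · omega
        · rw [hgQ]
    · intro hsub
      refine ⟨?_, ?_, ?_⟩
      · calc P.ncard = (g P).ncard := (ginv P).1.symm
          _ ≤ (g Q).ncard := Set.ncard_le_ncard hsub (Set.toFinite _)
          _ = Q.ncard := (ginv Q).1
      · exact fun hc => (ginv Q).2.1.1 (myHasC_mono hsub ((ginv P).2.1.2 hc))
      · exact fun hi => (ginv Q).2.2.1 (myHasI_mono hsub ((ginv P).2.2.2 hi))
  refine ⟨g, fun P Q => (embed_iff h P Q).trans (hmain P Q), fun P => ?_⟩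
  constructor
  · exact (embed_iff h P (g P)).2
      ⟨(ginv P).1.ge, fun hc => (ginv P).2.1.2 hc, fun hi => (ginv P).2.2.2 hi⟩
  · exact (embed_iff h (g P) P).2
      ⟨(ginv P).1.le, fun hc => (ginv P).2.1.1 hc, fun hi => (ginv P).2.2.1 hi⟩

end Aux

theorem subrep_of_card_le_three (α : Type*) [PartialOrder α] [Finite α]
    (h : Nat.card α ≤ 3) : SubRepresentable α := by
  classical
  rcases isEmpty_or_nonempty α with hα | hα
  · refine ⟨fun _ => ∅, fun P Q => ?_, fun P => ?_⟩
    · simp only [Set.Subset.refl, iff_true]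
      exact ⟨RelEmbedding.ofIsEmpty _ _⟩
    · exact ⟨⟨RelEmbedding.ofIsEmpty _ _⟩, ⟨RelEmbedding.ofIsEmpty _ _⟩⟩
  · obtain ⟨a⟩ := hα
    by_cases hC : myHasC (Set.univ : Set α) <;> by_cases hI : myHasI (Set.univ : Set α)
    · obtain ⟨x, -, y, -, hxy⟩ := hC
      obtain ⟨u, -, v, -, hu1, hu2⟩ := hI
      have huv : u ≠ v := fun huv => hu1 (huv ▸ le_rfl)
      have hshare : x = u ∨ x = v ∨ y = u ∨ y = v := by
        by_contra hcon
        push_neg at hcon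
        obtain ⟨h1, h2, h3, h4⟩ := hcon
        have hy4 : ({x, y, u, v} : Set α).ncard = 4 := by
          rw [Set.ncard_insert_of_notMem (by simp [hxy.ne, h1, h2]) (Set.toFinite _),
            Set.ncard_insert_of_notMem (by simp [h3, h4]) (Set.toFinite _),
            Set.ncard_pair huv]
        have := card_le3 h ({x, y, u, v} : Set α)
        omega
      have hSCfact : ∀ q : α, q ∈ ({x, y} : Set α) →
          (myHasC (Set.univ : Set α) →
            ({x, y} : Set α).ncard = 2 ∧ myHasC ({x, y} : Set α) ∧
              ¬ myHasI ({x, y} : Set α) ∧ q ∈ ({x, y} : Set α)) :=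
        fun q hq _ => ⟨Set.ncard_pair hxy.ne, ⟨x, by simp, y, by simp, hxy⟩,
          chain_pair hxy, hq⟩
      have hSAfact : ∀ q : α, q ∈ ({u, v} : Set α) →
          (myHasI (Set.univ : Set α) →
            ({u, v} : Set α).ncard = 2 ∧ myHasI ({u, v} : Set α) ∧
              ¬ myHasC ({u, v} : Set α) ∧ q ∈ ({u, v} : Set α)) :=
        fun q hq _ => ⟨Set.ncard_pair huv, ⟨u, by simp, v, by simp, hu1, hu2⟩,
          anti_pair hu1 hu2, hq⟩
      rcases hshare with hs | hs | hs | hs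
      · exact construct h x {x, y} {u, v} (hSCfact x (by simp))
          (hSAfact x (by simp [hs]))
      · exact construct h x {x, y} {u, v} (hSCfact x (by simp))
          (hSAfact x (by simp [hs]))
      · exact construct h y {x, y} {u, v} (hSCfact y (by simp))
          (hSAfact y (by simp [hs]))
      · exact construct h y {x, y} {u, v} (hSCfact y (by simp))
          (hSAfact y (by simp [hs]))
    · obtain ⟨x, -, y, -, hxy⟩ := hC
      exact construct h x {x, y} ∅
        (fun _ => ⟨Set.ncard_pair hxy.ne, ⟨x, by simp, y, by simp, hxy⟩,
          chain_pair hxy, by simp⟩)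
        (fun hi => absurd hi hI)
    · obtain ⟨u, -, v, -, hu1, hu2⟩ := hI
      have huv : u ≠ v := fun huv => hu1 (huv ▸ le_rfl)
      exact construct h u ∅ {u, v}
        (fun hc => absurd hc hC)
        (fun _ => ⟨Set.ncard_pair huv, ⟨u, by simp, v, by simp, hu1, hu2⟩,
          anti_pair hu1 hu2, by simp⟩)
    · exact construct h a ∅ ∅ (fun hc => absurd hc hC) (fun hi => absurd hi hI)
end

section
/- The four-element diamond poset {a, b, c, d} with b < a, b < c, a < d, c < d (a, c incomparable) is not sub-representable. -/
/-- Points 0,1,2,3 stand for b,a,c,d: b<a, b<c, a<d, c<d (and b<d). -/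
def leD : Fin 4 → Fin 4 → Bool := fun x y =>
  x = y || (x = 0 && y = 1) || (x = 0 && y = 2) || (x = 0 && y = 3) ||
    (x = 1 && y = 3) || (x = 2 && y = 3)

def Diamond : Type := Fin 4

instance : DecidableEq Diamond := inferInstanceAs (DecidableEq (Fin 4))
instance : Fintype Diamond := inferInstanceAs (Fintype (Fin 4))

instance : PartialOrder Diamond where
  le a b := leD a b
  le_refl := have h : ∀ a : Fin 4, leD a a = true := by decide
    fun a => h a
  le_trans := have h : ∀ a b c : Fin 4, leD a b = true → leD b c = true → leD a c = true := by decide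
    fun a b c => h a b c
  le_antisymm := have h : ∀ a b : Fin 4, leD a b = true → leD b a = true → a = b := by decide
    fun a b => h a b

/-! A sub-representation `g` of a finite poset preserves the size of every subset and turns
embeddability into inclusion. In the diamond, `{b}ᶜ` does not embed into `{d}ᶜ` (in `{d}ᶜ` any
two elements with a common upper bound are comparable), so their images are distinct 3-element
sets whose intersection has only two elements. The antichain `{a, c}` embeds into both, so its
image is that intersection; the chain `{a, d}` also embeds into both, so its image lies inside
the image of `{a, c}`, and the chain would embed into the antichain. -/

section General

variable {α : Type*}

theorem Set.ncard_le_ncard_of_orderEmbedding [Preorder α] {P Q : Set α} [Finite Q]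
    (f : P ↪o Q) : P.ncard ≤ Q.ncard := by
  simpa only [Nat.card_coe_set_eq] using Nat.card_le_card_of_injective f f.injective

theorem Set.eq_inter_of_ncard_add_two_eq_card [Finite α] {S T U : Set α}
    (hS : S.ncard + 1 = Nat.card α) (hT : T.ncard + 1 = Nat.card α) (hST : S ≠ T)
    (hU : U ⊆ S ∩ T) (hUcard : U.ncard + 2 = Nat.card α) : U = S ∩ T := by
  have hTS : ¬ T ⊆ S := fun h => hST (Set.eq_of_subset_of_ncard_le h (by omega)).symm
  have hunion : S.ncard < (S ∪ T).ncard :=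
    Set.ncard_lt_ncard (Set.ssubset_union_left_iff.mpr hTS)
  have hunion_le := Set.ncard_le_card (S ∪ T)
  have hinter := Set.ncard_union_add_ncard_inter S T
  exact Set.eq_of_subset_of_ncard_le hU (by omega)

theorem Set.ncard_compl_singleton_add_one [Finite α] (x : α) :
    ({x}ᶜ : Set α).ncard + 1 = Nat.card α := by
  simpa only [Set.ncard_singleton] using Set.ncard_compl_add_ncard {x}

theorem nonempty_orderEmbedding_of_subset [Preorder α] {P Q : Set α} (h : P ⊆ Q) :
    Nonempty (P ↪o Q) :=
  ⟨Subrel.inclusionEmbedding (· ≤ ·) h⟩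

theorem isEmpty_orderEmbedding_of_isAntichain [PartialOrder α] {C A : Set α}
    (hA : IsAntichain (· ≤ ·) A) {x y : α} (hx : x ∈ C) (hy : y ∈ C) (hxy : x < y) :
    IsEmpty (C ↪o A) := by
  refine ⟨fun f => ?_⟩
  have hlt : f ⟨x, hx⟩ < f ⟨y, hy⟩ := f.lt_iff_lt.mpr hxy
  exact hA (f ⟨x, hx⟩).2 (f ⟨y, hy⟩).2 (Subtype.coe_injective.ne hlt.ne) hlt.le

end General

section SubRepresentable

variable {α : Type*} [PartialOrder α] [Finite α] {g : Set α → Set α}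

theorem ncard_eq_of_embeds_both_ways
    (hequiv : ∀ P : Set α, Nonempty (P ↪o g P) ∧ Nonempty (g P ↪o P)) (P : Set α) :
    (g P).ncard = P.ncard := by
  obtain ⟨⟨f⟩, ⟨f'⟩⟩ := hequiv P
  exact le_antisymm (Set.ncard_le_ncard_of_orderEmbedding f')
    (Set.ncard_le_ncard_of_orderEmbedding f)

theorem not_subRepresentable_of_ncard {V L A C : Set α}
    (hV : V.ncard + 1 = Nat.card α) (hL : L.ncard + 1 = Nat.card α)
    (hA : A.ncard + 2 = Nat.card α) (hVL : IsEmpty (V ↪o L))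
    (hAV : Nonempty (A ↪o V)) (hAL : Nonempty (A ↪o L))
    (hCV : Nonempty (C ↪o V)) (hCL : Nonempty (C ↪o L)) (hCA : IsEmpty (C ↪o A)) :
    ¬ SubRepresentable α := by
  rintro ⟨g, hemb, hequiv⟩
  have hcard := ncard_eq_of_embeds_both_ways hequiv
  have hgVL : g V ≠ g L := fun h => hVL.false ((hemb V L).mpr h.le).some
  have hgA : g A = g V ∩ g L :=
    Set.eq_inter_of_ncard_add_two_eq_card (hcard V ▸ hV) (hcard L ▸ hL) hgVL
      (Set.subset_inter ((hemb A V).mp hAV) ((hemb A L).mp hAL)) (hcard A ▸ hA)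
  have hgC : g C ⊆ g A := hgA ▸ Set.subset_inter ((hemb C V).mp hCV) ((hemb C L).mp hCL)
  exact hCA.false ((hemb C A).mpr hgC).some

end SubRepresentable

namespace Diamond

def b : Diamond := (0 : Fin 4)
def a : Diamond := (1 : Fin 4)
def c : Diamond := (2 : Fin 4)
def d : Diamond := (3 : Fin 4)

instance : DecidableLE Diamond := fun x y => inferInstanceAs (Decidable (leD x y = true))

theorem ncard_pair_a_c_add_two : ({a, c} : Set Diamond).ncard + 2 = Nat.card Diamond := by
  rw [Set.ncard_pair (by decide), Nat.card_eq_fintype_card]; rfl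

theorem isAntichain_pair_a_c : IsAntichain (· ≤ ·) ({a, c} : Set Diamond) :=
  Set.pairwise_pair.mpr fun _ => ⟨(by decide : ¬ a ≤ c), (by decide : ¬ c ≤ a)⟩

theorem a_lt_d : a < d :=
  (by decide : a ≤ d).lt_of_ne (by decide)

theorem nonempty_orderEmbedding_pair_a_d_compl_d :
    Nonempty (({a, d} : Set Diamond) ↪o ({d}ᶜ : Set Diamond)) :=
  ⟨OrderEmbedding.ofMapLEIff (fun x => if x.1 = a then ⟨b, by decide⟩ else ⟨a, by decide⟩)
    (by decide)⟩

theorem isEmpty_orderEmbedding_compl_b_compl_d :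
    IsEmpty (({b}ᶜ : Set Diamond) ↪o ({d}ᶜ : Set Diamond)) := by
  refine ⟨fun f => ?_⟩
  have hbounded_comparable :
      ∀ x y z : ({d}ᶜ : Set Diamond), x ≤ z → y ≤ z → x ≤ y ∨ y ≤ x := by
    decide
  have hac : ¬ f ⟨a, by decide⟩ ≤ f ⟨c, by decide⟩ := fun h =>
    absurd (f.le_iff_le.mp h) (by decide)
  have hca : ¬ f ⟨c, by decide⟩ ≤ f ⟨a, by decide⟩ := fun h =>
    absurd (f.le_iff_le.mp h) (by decide)
  exact (hbounded_comparable _ _ (f ⟨d, by decide⟩) (f.le_iff_le.mpr (by decide))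
    (f.le_iff_le.mpr (by decide))).elim hac hca

end Diamond

theorem Diamond_not_subrep : ¬ SubRepresentable Diamond := by
  open Diamond in
  exact not_subRepresentable_of_ncard (V := {b}ᶜ) (L := {d}ᶜ) (A := {a, c}) (C := {a, d})
    (Set.ncard_compl_singleton_add_one b) (Set.ncard_compl_singleton_add_one d)
    ncard_pair_a_c_add_two isEmpty_orderEmbedding_compl_b_compl_d
    (nonempty_orderEmbedding_of_subset (Set.pair_subset (by decide) (by decide)))
    (nonempty_orderEmbedding_of_subset (Set.pair_subset (by decide) (by decide)))
    (nonempty_orderEmbedding_of_subset (Set.pair_subset (by decide) (by decide)))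
    nonempty_orderEmbedding_pair_a_d_compl_d
    (isEmpty_orderEmbedding_of_isAntichain isAntichain_pair_a_c (by decide) (by decide) a_lt_d)
end

section
/- If a poset P contains both a vee (three points x, y, z with x < y, x < z, and y, z incomparable) and a wedge (three points u, v, w with u < w, v < w, and u, v incomparable), then P is not sub-representable. -/
private def inclEmb {α : Type*} [PartialOrder α] {s t : Set α} (h : s ⊆ t) :
    s ↪o t :=
  OrderEmbedding.ofMapLEIff (fun a => ⟨a.1, h a.2⟩) (fun _ _ => Iff.rfl)

private lemma pairEmb {α : Type*} [PartialOrder α] {p q p' q' : α}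
    (hpq : p ≠ q) (h1 : (p ≤ q) ↔ (p' ≤ q')) (h2 : (q ≤ p) ↔ (q' ≤ p')) :
    Nonempty (↥({p, q} : Set α) ↪o ↥({p', q'} : Set α)) := by
  classical
  refine ⟨OrderEmbedding.ofMapLEIff
    (fun a => if a.1 = p then ⟨p', by simp⟩ else ⟨q', by simp⟩) ?_⟩
  rintro ⟨a, ha⟩ ⟨b, hb⟩
  simp only [Set.mem_insert_iff, Set.mem_singleton_iff] at ha hb
  rcases ha with rfl | rfl <;> rcases hb with rfl | rfl <;>
    simp [hpq, Ne.symm hpq, Subtype.mk_le_mk, ← h1, ← h2]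

theorem not_subrep_of_vee_and_wedge (α : Type*) [PartialOrder α]
    (hvee : ∃ x y z : α, x < y ∧ x < z ∧ ¬ y ≤ z ∧ ¬ z ≤ y)
    (hwedge : ∃ u v w : α, u < w ∧ v < w ∧ ¬ u ≤ v ∧ ¬ v ≤ u) :
    ¬ SubRepresentable α := by
  obtain ⟨x, y, z, hxy, hxz, hyz, hzy⟩ := hvee
  obtain ⟨u, v, w, huw, hvw, huv, hvu⟩ := hwedge
  rintro ⟨g, hiff, hmut⟩
  -- C = {x,y} (2-chain), A = {y,z} (2-antichain), V = {x,y,z} (vee), W = {u,v,w} (wedge)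
  have hCV : g {x, y} ⊆ g {x, y, z} := (hiff _ _).1
    ⟨inclEmb (by rintro t (rfl | rfl) <;> simp)⟩
  have hAV : g {y, z} ⊆ g {x, y, z} := (hiff _ _).1
    ⟨inclEmb (by rintro t (rfl | rfl) <;> simp)⟩
  have hCW : g {x, y} ⊆ g {u, v, w} := by
    refine (hiff _ _).1 ?_
    have h : ({x, y} : Set α) = {x, y} := rfl
    have : Nonempty (↥({x, y} : Set α) ↪o ↥({u, w} : Set α)) :=
      pairEmb hxy.ne (iff_of_true hxy.le huw.le) (iff_of_false hxy.not_ge huw.not_ge)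
    obtain ⟨e⟩ := this
    exact ⟨e.trans (inclEmb (by rintro t (rfl | rfl) <;> simp))⟩
  have hAW : g {y, z} ⊆ g {u, v, w} := by
    refine (hiff _ _).1 ?_
    have : Nonempty (↥({y, z} : Set α) ↪o ↥({u, v} : Set α)) :=
      pairEmb (fun h => hyz h.le) (iff_of_false hyz huv) (iff_of_false hzy hvu)
    obtain ⟨e⟩ := this
    exact ⟨e.trans (inclEmb (by rintro t (rfl | rfl) <;> simp))⟩
  obtain ⟨e1⟩ := (hmut {x, y}).1
  obtain ⟨e2⟩ := (hmut {y, z}).1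
  have hxC : x ∈ ({x, y} : Set α) := Or.inl rfl
  have hyC : y ∈ ({x, y} : Set α) := Or.inr rfl
  have hyA : y ∈ ({y, z} : Set α) := Or.inl rfl
  have hzA : z ∈ ({y, z} : Set α) := Or.inr rfl
  have hab : (e1 ⟨x, hxC⟩ : α) < (e1 ⟨y, hyC⟩ : α) :=
    Subtype.coe_lt_coe.2 (e1.strictMono (Subtype.mk_lt_mk.2 hxy))
  have hcd : ¬ (e2 ⟨y, hyA⟩ : α) ≤ (e2 ⟨z, hzA⟩ : α) :=
    fun h => hyz (e2.le_iff_le.1 (Subtype.coe_le_coe.1 h))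
  have hdc : ¬ (e2 ⟨z, hzA⟩ : α) ≤ (e2 ⟨y, hyA⟩ : α) :=
    fun h => hzy (e2.le_iff_le.1 (Subtype.coe_le_coe.1 h))
  have hSV : g {x, y} ∪ g {y, z} ⊆ g {x, y, z} := Set.union_subset hCV hAV
  have hSW : g {x, y} ∪ g {y, z} ⊆ g {u, v, w} := Set.union_subset hCW hAW
  obtain ⟨eV'⟩ := (hmut {x, y, z}).2
  obtain ⟨eW'⟩ := (hmut {u, v, w}).2
  let eV : ↥(g {x, y} ∪ g {y, z}) ↪o ↥({x, y, z} : Set α) := (inclEmb hSV).trans eV'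
  let eW : ↥(g {x, y} ∪ g {y, z}) ↪o ↥({u, v, w} : Set α) := (inclEmb hSW).trans eW'
  have haS : ((e1 ⟨x, hxC⟩ : ↥(g {x, y})) : α) ∈ g {x, y} ∪ g {y, z} := Or.inl (e1 ⟨x, hxC⟩).2
  have hbS : ((e1 ⟨y, hyC⟩ : ↥(g {x, y})) : α) ∈ g {x, y} ∪ g {y, z} := Or.inl (e1 ⟨y, hyC⟩).2
  have hcS : ((e2 ⟨y, hyA⟩ : ↥(g {y, z})) : α) ∈ g {x, y} ∪ g {y, z} := Or.inr (e2 ⟨y, hyA⟩).2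
  have hdS : ((e2 ⟨z, hzA⟩ : ↥(g {y, z})) : α) ∈ g {x, y} ∪ g {y, z} := Or.inr (e2 ⟨z, hzA⟩).2
  -- vee side
  have hfab : eV ⟨_, haS⟩ < eV ⟨_, hbS⟩ := eV.lt_iff_lt.2 (Subtype.mk_lt_mk.2 hab)
  have hfcd : ¬ eV ⟨_, hcS⟩ ≤ eV ⟨_, hdS⟩ := fun h => hcd (eV.le_iff_le.1 h)
  have hfdc : ¬ eV ⟨_, hdS⟩ ≤ eV ⟨_, hcS⟩ := fun h => hdc (eV.le_iff_le.1 h)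
  have hfaV := (eV ⟨_, haS⟩).2
  have hfbV := (eV ⟨_, hbS⟩).2
  have hfcV := (eV ⟨_, hcS⟩).2
  have hfdV := (eV ⟨_, hdS⟩).2
  simp only [Set.mem_insert_iff, Set.mem_singleton_iff] at hfaV hfbV hfcV hfdV
  have hfcx : ((eV ⟨_, hcS⟩ : ↥({x, y, z} : Set α)) : α) ≠ x := by
    intro h
    apply hfcd
    show ((eV ⟨_, hcS⟩ : ↥({x, y, z} : Set α)) : α) ≤ _
    rw [h]
    rcases hfdV with h' | h' | h' <;> rw [h'] <;> first | exact le_refl x | exact hxy.le | exact hxz.le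
  have hfdx : ((eV ⟨_, hdS⟩ : ↥({x, y, z} : Set α)) : α) ≠ x := by
    intro h
    apply hfdc
    show ((eV ⟨_, hdS⟩ : ↥({x, y, z} : Set α)) : α) ≤ _
    rw [h]
    rcases hfcV with h' | h' | h' <;> rw [h'] <;> first | exact le_refl x | exact hxy.le | exact hxz.le
  have hfax : ((eV ⟨_, haS⟩ : ↥({x, y, z} : Set α)) : α) = x := by
    have hlt : ((eV ⟨_, haS⟩ : ↥({x, y, z} : Set α)) : α) < (eV ⟨_, hbS⟩ : ↥({x, y, z} : Set α)) :=
      Subtype.coe_lt_coe.2 hfab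
    rcases hfaV with h | h | h
    · exact h
    · exfalso
      rw [h] at hlt
      rcases hfbV with h' | h' | h' <;> rw [h'] at hlt
      · exact hxy.not_gt hlt
      · exact lt_irrefl _ hlt
      · exact hyz hlt.le
    · exfalso
      rw [h] at hlt
      rcases hfbV with h' | h' | h' <;> rw [h'] at hlt
      · exact hxz.not_gt hlt
      · exact hzy hlt.le
      · exact lt_irrefl _ hlt
  have hac : ((e1 ⟨x, hxC⟩ : ↥(g {x, y})) : α) < ((e2 ⟨y, hyA⟩ : ↥(g {y, z})) : α) := by
    have h : eV ⟨_, haS⟩ < eV ⟨_, hcS⟩ := by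
      rw [← Subtype.coe_lt_coe, hfax]
      rcases hfcV with h | h | h
      · exact absurd h hfcx
      · rw [h]; exact hxy
      · rw [h]; exact hxz
    exact Subtype.mk_lt_mk.1 (eV.lt_iff_lt.1 h)
  have had : ((e1 ⟨x, hxC⟩ : ↥(g {x, y})) : α) < ((e2 ⟨z, hzA⟩ : ↥(g {y, z})) : α) := by
    have h : eV ⟨_, haS⟩ < eV ⟨_, hdS⟩ := by
      rw [← Subtype.coe_lt_coe, hfax]
      rcases hfdV with h | h | h
      · exact absurd h hfdx
      · rw [h]; exact hxy
      · rw [h]; exact hxz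
    exact Subtype.mk_lt_mk.1 (eV.lt_iff_lt.1 h)
  -- wedge side
  have hgab : eW ⟨_, haS⟩ < eW ⟨_, hbS⟩ := eW.lt_iff_lt.2 (Subtype.mk_lt_mk.2 hab)
  have hgcd : ¬ eW ⟨_, hcS⟩ ≤ eW ⟨_, hdS⟩ := fun h => hcd (eW.le_iff_le.1 h)
  have hgdc : ¬ eW ⟨_, hdS⟩ ≤ eW ⟨_, hcS⟩ := fun h => hdc (eW.le_iff_le.1 h)
  have hgaW := (eW ⟨_, haS⟩).2
  have hgbW := (eW ⟨_, hbS⟩).2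
  have hgcW := (eW ⟨_, hcS⟩).2
  have hgdW := (eW ⟨_, hdS⟩).2
  simp only [Set.mem_insert_iff, Set.mem_singleton_iff] at hgaW hgbW hgcW hgdW
  have hgcw : ((eW ⟨_, hcS⟩ : ↥({u, v, w} : Set α)) : α) ≠ w := by
    intro h
    apply hgdc
    show ((eW ⟨_, hdS⟩ : ↥({u, v, w} : Set α)) : α) ≤ _
    rw [h]
    rcases hgdW with h' | h' | h' <;> rw [h'] <;> first | exact le_refl w | exact huw.le | exact hvw.le
  have hgdw : ((eW ⟨_, hdS⟩ : ↥({u, v, w} : Set α)) : α) ≠ w := by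
    intro h
    apply hgcd
    show ((eW ⟨_, hcS⟩ : ↥({u, v, w} : Set α)) : α) ≤ _
    rw [h]
    rcases hgcW with h' | h' | h' <;> rw [h'] <;> first | exact le_refl w | exact huw.le | exact hvw.le
  have hgaw : ((eW ⟨_, haS⟩ : ↥({u, v, w} : Set α)) : α) ≠ w := by
    intro h
    have hlt : ((eW ⟨_, haS⟩ : ↥({u, v, w} : Set α)) : α) < (eW ⟨_, hbS⟩ : ↥({u, v, w} : Set α)) :=
      Subtype.coe_lt_coe.2 hgab
    rw [h] at hlt
    rcases hgbW with h' | h' | h' <;> rw [h'] at hlt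
    · exact huw.not_gt hlt
    · exact hvw.not_gt hlt
    · exact lt_irrefl _ hlt
  have hgcd' : ((eW ⟨_, hcS⟩ : ↥({u, v, w} : Set α)) : α) ≠ (eW ⟨_, hdS⟩ : ↥({u, v, w} : Set α)) :=
    fun h => hgcd (le_of_eq (Subtype.ext h))
  have key : ((eW ⟨_, haS⟩ : ↥({u, v, w} : Set α)) : α) = (eW ⟨_, hcS⟩ : ↥({u, v, w} : Set α)) ∨
      ((eW ⟨_, haS⟩ : ↥({u, v, w} : Set α)) : α) = (eW ⟨_, hdS⟩ : ↥({u, v, w} : Set α)) := by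
    rcases hgaW with h | h | h
    · rcases hgcW with h' | h' | h'
      · exact Or.inl (h.trans h'.symm)
      · rcases hgdW with h'' | h'' | h''
        · exact Or.inr (h.trans h''.symm)
        · exact absurd (h'.trans h''.symm) hgcd'
        · exact absurd h'' hgdw
      · exact absurd h' hgcw
    · rcases hgcW with h' | h' | h'
      · rcases hgdW with h'' | h'' | h''
        · exact absurd (h'.trans h''.symm) hgcd'
        · exact Or.inr (h.trans h''.symm)
        · exact absurd h'' hgdw
      · exact Or.inl (h.trans h'.symm)
      · exact absurd h' hgcw
    · exact absurd h hgaw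
  rcases key with h | h
  · have h2 := eW.injective (Subtype.ext h)
    exact hac.ne (congrArg Subtype.val h2)
  · have h2 := eW.injective (Subtype.ext h)
    exact had.ne (congrArg Subtype.val h2)
end

section
/- If a poset P contains points x, y and a chain C order-isomorphic to ℕ (with its usual order, which has no maximum element), where x, y are incomparable to each other and every element of C is below both x and y, then P is not sub-representable. -/
theorem not_subrep_of_chain_below_incomparable_pair (α : Type*) [PartialOrder α]
    (f : ℕ ↪o α) (x y : α) (hxy : ¬ x ≤ y ∧ ¬ y ≤ x)
    (hbelow : ∀ n : ℕ, f n < x ∧ f n < y) :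
    ¬ SubRepresentable α := by
  classical
  rintro ⟨g, h1, h2⟩
  obtain ⟨hxy1, hxy2⟩ := hxy
  have hf0x : f 0 < x := (hbelow 0).1
  have hf01 : f 0 < f 1 := f.strictMono Nat.zero_lt_one
  set T : Set α := Set.range f with hT
  set E : Set α := Set.range f ∪ {x} with hE
  set F : Set α := {f 0, x, y} with hF
  set D : Set α := {f 0, f 1} with hD
  set V : Set α := Set.range f ∪ {x, y} with hV
  -- inclusions give embeddings
  have hincl : ∀ P Q : Set α, P ⊆ Q → Nonempty (↥P ↪o ↥Q) := fun P Q h =>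
    ⟨OrderEmbedding.ofMapLEIff (Set.inclusion h) fun a b => Iff.rfl⟩
  have hDT : D ⊆ T := by
    rintro z hz
    rcases hz with rfl | rfl
    · exact ⟨0, rfl⟩
    · exact ⟨1, rfl⟩
  have hTE : T ⊆ E := Set.subset_union_left
  have hEV : E ⊆ V := by
    rintro z (hz | rfl)
    · exact Or.inl hz
    · exact Or.inr (Or.inl rfl)
  have hFV : F ⊆ V := by
    rintro z hz
    rcases hz with rfl | rfl | rfl
    · exact Or.inl ⟨0, rfl⟩
    · exact Or.inr (Or.inl rfl)
    · exact Or.inr (Or.inr rfl)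
  -- the custom embedding D ↪ F
  have hnotxf0 : ¬ x ≤ f 0 := fun h => absurd (lt_of_le_of_lt h hf0x) (lt_irrefl x)
  have hnotf10 : ¬ f 1 ≤ f 0 := fun h => absurd (lt_of_le_of_lt h hf01) (lt_irrefl _)
  have hDF : Nonempty (↥D ↪o ↥F) := by
    refine ⟨OrderEmbedding.ofMapLEIff
      (fun z => if z.val = f 0 then ⟨f 0, Or.inl rfl⟩ else ⟨x, Or.inr (Or.inl rfl)⟩) ?_⟩
    rintro ⟨u, hu⟩ ⟨v, hv⟩
    have hu' : u = f 0 ∨ u = f 1 := hu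
    have hv' : v = f 0 ∨ v = f 1 := hv
    have hne10 : f 1 ≠ f 0 := ne_of_gt hf01
    rcases hu' with rfl | rfl <;> rcases hv' with rfl | rfl <;>
      simp [hne10, Subtype.mk_le_mk, hf0x.le, hf01.le, hnotxf0, hnotf10] <;>
      exact (by simpa [← Subtype.coe_le_coe] using (by simp [hf0x.le, hnotxf0]))
  -- inclusions of g-images
  have hgDT : g D ⊆ g T := (h1 D T).mp (hincl D T hDT)
  have hgTE : g T ⊆ g E := (h1 T E).mp (hincl T E hTE)
  have hgEV : g E ⊆ g V := (h1 E V).mp (hincl E V hEV)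
  have hgFV : g F ⊆ g V := (h1 F V).mp (hincl F V hFV)
  have hgDF : g D ⊆ g F := (h1 D F).mp hDF
  -- embeddings from condition 2
  obtain ⟨e⟩ : Nonempty (↥(g V) ↪o ↥V) := (h2 V).2
  obtain ⟨uT⟩ : Nonempty (↥T ↪o ↥(g T)) := (h2 T).1
  obtain ⟨wT⟩ : Nonempty (↥(g T) ↪o ↥T) := (h2 T).2
  obtain ⟨vF⟩ : Nonempty (↥F ↪o ↥(g F)) := (h2 F).1
  obtain ⟨wF⟩ : Nonempty (↥(g F) ↪o ↥F) := (h2 F).2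
  obtain ⟨uD⟩ : Nonempty (↥D ↪o ↥(g D)) := (h2 D).1
  obtain ⟨wE⟩ : Nonempty (↥(g E) ↪o ↥E) := (h2 E).2
  -- unique incomparable pair in V
  have hpairV : ∀ u ∈ V, ∀ v ∈ V, ¬ u ≤ v → ¬ v ≤ u →
      (u = x ∧ v = y) ∨ (u = y ∧ v = x) := by
    rintro u hu v hv huv hvu
    rcases hu with ⟨i, rfl⟩ | hu
    · exfalso
      rcases hv with ⟨j, rfl⟩ | hv
      · rcases le_total i j with h | h
        · exact huv (f.monotone h)
        · exact hvu (f.monotone h)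
      · rcases hv with rfl | rfl
        · exact huv (hbelow i).1.le
        · exact huv (hbelow i).2.le
    · rcases hv with ⟨j, rfl⟩ | hv
      · exfalso
        rcases hu with rfl | rfl
        · exact hvu (hbelow j).1.le
        · exact hvu (hbelow j).2.le
      · rcases hu with rfl | rfl <;> rcases hv with rfl | rfl
        · exact absurd le_rfl huv
        · exact Or.inl ⟨rfl, rfl⟩
        · exact Or.inr ⟨rfl, rfl⟩
        · exact absurd le_rfl huv
  -- in F, anything strictly above something is x or y
  have hFtop : ∀ u ∈ F, ∀ v ∈ F, u < v → v = x ∨ v = y := by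
    rintro u hu v hv huv
    rcases hv with hv | hv | hv
    · exfalso
      rw [hv] at huv
      rcases hu with hu | hu | hu <;> rw [hu] at huv
      · exact lt_irrefl _ huv
      · exact lt_irrefl _ (lt_trans huv hf0x)
      · exact lt_irrefl _ (lt_trans huv (hbelow 0).2)
    · exact Or.inl hv
    · exact Or.inr hv
  -- unique incomparable pair in F
  have hpairF : ∀ u ∈ F, ∀ v ∈ F, ¬ u ≤ v → ¬ v ≤ u →
      (u = x ∧ v = y) ∨ (u = y ∧ v = x) := fun u hu v hv huv hvu =>
    hpairV u (hFV hu) v (hFV hv) huv hvu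
  -- E is a chain
  have hEchain : ∀ u ∈ E, ∀ v ∈ E, u ≤ v ∨ v ≤ u := by
    rintro u hu v hv
    rcases hu with ⟨i, rfl⟩ | rfl
    · rcases hv with ⟨j, rfl⟩ | rfl
      · rcases le_total i j with h | h
        · exact Or.inl (f.monotone h)
        · exact Or.inr (f.monotone h)
      · exact Or.inl (hbelow i).1.le
    · rcases hv with ⟨j, rfl⟩ | rfl
      · exact Or.inr (hbelow j).1.le
      · exact Or.inl le_rfl
  -- g E is a chain
  have hgEchain : ∀ z ∈ g E, ∀ z' ∈ g E, z ≤ z' ∨ z' ≤ z := by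
    intro z hz z' hz'
    have h := hEchain (wE ⟨z, hz⟩).val (wE ⟨z, hz⟩).2 (wE ⟨z', hz'⟩).val (wE ⟨z', hz'⟩).2
    rcases h with h | h
    · exact Or.inl (Subtype.mk_le_mk.mp (wE.le_iff_le.mp (Subtype.coe_le_coe.mp h)))
    · exact Or.inr (Subtype.mk_le_mk.mp (wE.le_iff_le.mp (Subtype.coe_le_coe.mp h)))
  -- the two incomparable elements of g F
  have hxF : x ∈ F := Or.inr (Or.inl rfl)
  have hyF : y ∈ F := Or.inr (Or.inr rfl)
  set p : ↥(g F) := vF ⟨x, hxF⟩ with hp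
  set q : ↥(g F) := vF ⟨y, hyF⟩ with hq
  have hpq1 : ¬ p.val ≤ q.val := by
    intro h
    exact hxy1 (Subtype.mk_le_mk.mp (vF.le_iff_le.mp (Subtype.coe_le_coe.mp h)))
  have hpq2 : ¬ q.val ≤ p.val := by
    intro h
    exact hxy2 (Subtype.mk_le_mk.mp (vF.le_iff_le.mp (Subtype.coe_le_coe.mp h)))
  -- the element b of g D
  have hf0D : f 0 ∈ D := Or.inl rfl
  have hf1D : f 1 ∈ D := Or.inr rfl
  set a : ↥(g D) := uD ⟨f 0, hf0D⟩ with ha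
  set b : ↥(g D) := uD ⟨f 1, hf1D⟩ with hb
  have hab : a.val < b.val :=
    Subtype.coe_lt_coe.mpr (uD.strictMono (Subtype.mk_lt_mk.mpr hf01))
  have hagF : a.val ∈ g F := hgDF a.2
  have hbgF : b.val ∈ g F := hgDF b.2
  have hbgT : b.val ∈ g T := hgDT b.2
  have hbgE : b.val ∈ g E := hgTE hbgT
  have hbgV : b.val ∈ g V := hgEV hbgE
  -- b is (essentially) p or q
  have hABlt : (⟨a.val, hagF⟩ : ↥(g F)) < ⟨b.val, hbgF⟩ := Subtype.mk_lt_mk.mpr hab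
  have hwlt : (wF ⟨a.val, hagF⟩).val < (wF ⟨b.val, hbgF⟩).val :=
    Subtype.coe_lt_coe.mpr (wF.strictMono hABlt)
  have hwBtop : (wF ⟨b.val, hbgF⟩).val = x ∨ (wF ⟨b.val, hbgF⟩).val = y :=
    hFtop _ (wF ⟨a.val, hagF⟩).2 _ (wF ⟨b.val, hbgF⟩).2 hwlt
  have hwpq1 : ¬ (wF p).val ≤ (wF q).val := by
    intro h
    exact hpq1 (Subtype.coe_le_coe.mpr (wF.le_iff_le.mp (Subtype.mk_le_mk.mpr h)))
  have hwpq2 : ¬ (wF q).val ≤ (wF p).val := by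
    intro h
    exact hpq2 (Subtype.coe_le_coe.mpr (wF.le_iff_le.mp (Subtype.mk_le_mk.mpr h)))
  have hwpqxy : ((wF p).val = x ∧ (wF q).val = y) ∨ ((wF p).val = y ∧ (wF q).val = x) :=
    hpairF _ (wF p).2 _ (wF q).2 hwpq1 hwpq2
  have hbpq : b.val = p.val ∨ b.val = q.val := by
    have hBp : (⟨b.val, hbgF⟩ : ↥(g F)) = p ∨ (⟨b.val, hbgF⟩ : ↥(g F)) = q := by
      rcases hwBtop with hB | hB <;> rcases hwpqxy with ⟨h1', h2'⟩ | ⟨h1', h2'⟩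
      · exact Or.inl (wF.injective (Subtype.ext (hB.trans h1'.symm)))
      · exact Or.inr (wF.injective (Subtype.ext (hB.trans h2'.symm)))
      · exact Or.inr (wF.injective (Subtype.ext (hB.trans h2'.symm)))
      · exact Or.inl (wF.injective (Subtype.ext (hB.trans h1'.symm)))
    rcases hBp with h | h
    · exact Or.inl (congrArg Subtype.val h)
    · exact Or.inr (congrArg Subtype.val h)
  -- e-images of p and q are x and y (in some order)
  have hpgV : p.val ∈ g V := hgFV p.2
  have hqgV : q.val ∈ g V := hgFV q.2
  have hepeq1 : ¬ (e ⟨p.val, hpgV⟩).val ≤ (e ⟨q.val, hqgV⟩).val := by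
    intro h
    exact hpq1 (Subtype.mk_le_mk.mp (e.le_iff_le.mp (Subtype.coe_le_coe.mp h)))
  have hepeq2 : ¬ (e ⟨q.val, hqgV⟩).val ≤ (e ⟨p.val, hpgV⟩).val := by
    intro h
    exact hpq2 (Subtype.mk_le_mk.mp (e.le_iff_le.mp (Subtype.coe_le_coe.mp h)))
  have hpexy : ((e ⟨p.val, hpgV⟩).val = x ∧ (e ⟨q.val, hqgV⟩).val = y) ∨
      ((e ⟨p.val, hpgV⟩).val = y ∧ (e ⟨q.val, hqgV⟩).val = x) :=
    hpairV _ (e ⟨p.val, hpgV⟩).2 _ (e ⟨q.val, hqgV⟩).2 hepeq1 hepeq2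
  -- so e-image of b is x or y
  have hebxy : (e ⟨b.val, hbgV⟩).val = x ∨ (e ⟨b.val, hbgV⟩).val = y := by
    rcases hbpq with h | h
    · have : (⟨b.val, hbgV⟩ : ↥(g V)) = ⟨p.val, hpgV⟩ := Subtype.ext h
      rw [this]
      rcases hpexy with ⟨h1', _⟩ | ⟨h1', _⟩
      · exact Or.inl h1'
      · exact Or.inr h1'
    · have : (⟨b.val, hbgV⟩ : ↥(g V)) = ⟨q.val, hqgV⟩ := Subtype.ext h
      rw [this]
      rcases hpexy with ⟨_, h2'⟩ | ⟨_, h2'⟩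
      · exact Or.inr h2'
      · exact Or.inl h2'
  -- b.val is an upper bound of g T
  have hub : ∀ z ∈ g T, z ≤ b.val := by
    intro z hz
    have hzE : z ∈ g E := hgTE hz
    have hzV : z ∈ g V := hgEV hzE
    have hcomp : z ≤ b.val ∨ b.val ≤ z := hgEchain z hzE b.val hbgE
    have hcompe : (e ⟨z, hzV⟩).val ≤ (e ⟨b.val, hbgV⟩).val ∨
        (e ⟨b.val, hbgV⟩).val ≤ (e ⟨z, hzV⟩).val := by
      rcases hcomp with h | h
      · exact Or.inl (Subtype.coe_le_coe.mpr (e.monotone (Subtype.mk_le_mk.mpr h)))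
      · exact Or.inr (Subtype.coe_le_coe.mpr (e.monotone (Subtype.mk_le_mk.mpr h)))
    have hvz : (e ⟨z, hzV⟩).val ∈ V := (e ⟨z, hzV⟩).2
    have hle : (e ⟨z, hzV⟩).val ≤ (e ⟨b.val, hbgV⟩).val := by
      rcases hebxy with hB | hB
      · rw [hB]
        rcases hvz with ⟨k, hk⟩ | hv | hv
        · rw [← hk]; exact (hbelow k).1.le
        · rw [hv]
        · exfalso
          rw [hv] at hcompe
          rw [hB] at hcompe
          rcases hcompe with h | h
          · exact hxy2 h
          · exact hxy1 h
      · rw [hB]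
        rcases hvz with ⟨k, hk⟩ | hv | hv
        · rw [← hk]; exact (hbelow k).2.le
        · exfalso
          rw [hv] at hcompe
          rw [hB] at hcompe
          rcases hcompe with h | h
          · exact hxy1 h
          · exact hxy2 h
        · rw [hv]
    exact Subtype.mk_le_mk.mp (e.le_iff_le.mp (Subtype.coe_le_coe.mp hle))
  -- final contradiction: g T is bi-embeddable with ℕ but has an upper bound b.val ∈ g T
  obtain ⟨N, hN⟩ := (wT ⟨b.val, hbgT⟩).2
  set c : ℕ → ↥T := fun n => wT (uT ⟨f n, ⟨n, rfl⟩⟩) with hc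
  have hcm : ∀ n, ∃ k, f k = (c n).val := fun n => (c n).2
  set m : ℕ → ℕ := fun n => (hcm n).choose with hm
  have hmspec : ∀ n, f (m n) = (c n).val := fun n => (hcm n).choose_spec
  have hmono : StrictMono m := by
    intro i j hij
    have h1' : (⟨f i, ⟨i, rfl⟩⟩ : ↥T) < ⟨f j, ⟨j, rfl⟩⟩ :=
      Subtype.mk_lt_mk.mpr (f.strictMono hij)
    have h2' : c i < c j := wT.strictMono (uT.strictMono h1')
    have h3' : f (m i) < f (m j) := by
      rw [hmspec i, hmspec j]
      exact Subtype.coe_lt_coe.mpr h2'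
    exact f.strictMono.lt_iff_lt.mp h3'
  have hbound : ∀ n, m n ≤ N := by
    intro n
    have h1' : (uT ⟨f n, ⟨n, rfl⟩⟩).val ≤ b.val := hub _ (uT ⟨f n, ⟨n, rfl⟩⟩).2
    have h2' : (uT ⟨f n, ⟨n, rfl⟩⟩ : ↥(g T)) ≤ ⟨b.val, hbgT⟩ := Subtype.coe_le_coe.mp h1'
    have h3' : c n ≤ wT ⟨b.val, hbgT⟩ := wT.monotone h2'
    have h4' : f (m n) ≤ f N := by
      rw [hmspec n, hN]
      exact Subtype.coe_le_coe.mpr h3'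
    exact f.le_iff_le.mp h4'
  have hge : ∀ n, n ≤ m n := by
    intro n
    induction n with
    | zero => exact Nat.zero_le _
    | succ k ih => exact Nat.lt_of_le_of_lt ih (hmono (Nat.lt_succ_self k))
  have := hbound (N + 1)
  have := hge (N + 1)
  omega
end

section
/- If a poset P is sub-representable, then P is a flower, or a co-flower, or a disjoint union of chains (i.e., comparability is an equivalence-like relation: any two elements comparable to a common element are comparable). -/
def IsFlower (α : Type*) [PartialOrder α] : Prop :=
  ∃ x : α, IsChain (· ≤ ·) {y : α | y < x} ∧
    (∀ S : Set α, S ⊆ {y : α | y < x} → S.Nonempty → ∃ m ∈ S, ∀ s ∈ S, s ≤ m) ∧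
    IsAntichain (· ≤ ·) {y : α | x < y} ∧ ({y : α | x < y}).Nontrivial ∧
    ∀ y : α, y < x ∨ y = x ∨ x < y

def IsDisjointUnionOfChains (α : Type*) [PartialOrder α] : Prop :=
  ∀ a b c : α, (a ≤ c ∨ c ≤ a) → (b ≤ c ∨ c ≤ b) → (a ≤ b ∨ b ≤ a)

set_option linter.unusedSectionVars false
set_option linter.unusedVariables false

namespace SubRepAux

variable {β : Type*} [PartialOrder β]

def inclEmb {P Q : Set β} (h : P ⊆ Q) : ↥P ↪o ↥Q :=
  ⟨⟨fun a => ⟨a.1, h a.2⟩, fun a b hab => Subtype.ext (by simpa using congrArg Subtype.val hab)⟩, Iff.rfl⟩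

open Classical in
noncomputable def emb_pair {x y u v : β} {Q : Set β} (hu : u ∈ Q) (hv : v ∈ Q)
    (hxy : x ≠ y) (h1 : x ≤ y ↔ u ≤ v) (h2 : y ≤ x ↔ v ≤ u) :
    ↥({x, y} : Set β) ↪o ↥Q := by
  refine OrderEmbedding.ofMapLEIff (fun t => if (t : β) = x then ⟨u, hu⟩ else ⟨v, hv⟩) ?_
  rintro ⟨a, ha⟩ ⟨b, hb⟩
  simp only [Set.mem_insert_iff, Set.mem_singleton_iff] at ha hb
  rcases ha with rfl | rfl <;> rcases hb with rfl | rfl <;>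
    simp only [if_pos rfl, if_neg (Ne.symm hxy), Subtype.mk_le_mk]
  · exact ⟨fun _ => le_refl _, fun _ => le_refl _⟩
  · exact h1.symm
  · exact h2.symm
  · exact ⟨fun _ => le_refl _, fun _ => le_refl _⟩

noncomputable def emb_singleton {a : β} {Q : Set β} (z : β) (hz : z ∈ Q) :
    ↥({a} : Set β) ↪o ↥Q := by
  refine OrderEmbedding.ofMapLEIff (fun _ => ⟨z, hz⟩) ?_
  rintro ⟨u, hu⟩ ⟨v, hv⟩
  simp only [Set.mem_singleton_iff] at hu hv
  subst hu; subst hv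
  simp

variable {g : Set β → Set β}
  (hg1 : ∀ P₁ P₂ : Set β, Nonempty (↥P₁ ↪o ↥P₂) ↔ g P₁ ⊆ g P₂)
  (hg2 : ∀ P₁ : Set β, Nonempty (↥P₁ ↪o ↥(g P₁)) ∧ Nonempty (↥(g P₁) ↪o ↥P₁))

include hg1 hg2

lemma exists_point (x : β) : ∃ p, ∀ P : Set β, P.Nonempty → p ∈ g P := by
  obtain ⟨e⟩ := (hg2 {x}).1
  refine ⟨(e ⟨x, rfl⟩).1, fun P hP => ?_⟩
  obtain ⟨z, hz⟩ := hP
  exact (hg1 {x} P).1 ⟨emb_singleton z hz⟩ (e ⟨x, rfl⟩).2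

lemma pair_in_g (x y : β) (hxy : x ≠ y) :
    ∃ u ∈ g {x, y}, ∃ v ∈ g {x, y}, u ≠ v ∧ (x ≤ y ↔ u ≤ v) ∧ (y ≤ x ↔ v ≤ u) := by
  obtain ⟨e⟩ := (hg2 {x, y}).1
  have hx : x ∈ ({x, y} : Set β) := by simp
  have hy : y ∈ ({x, y} : Set β) := by simp
  refine ⟨(e ⟨x, hx⟩).1, (e ⟨x, hx⟩).2, (e ⟨y, hy⟩).1, (e ⟨y, hy⟩).2, ?_, ?_, ?_⟩
  · intro hh
    have : (⟨x, hx⟩ : ↥({x,y} : Set β)) = ⟨y, hy⟩ := e.injective (Subtype.ext hh)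
    exact hxy (congrArg Subtype.val this)
  · simp only [Subtype.coe_le_coe, OrderEmbedding.le_iff_le, Subtype.mk_le_mk]
  · simp only [Subtype.coe_le_coe, OrderEmbedding.le_iff_le, Subtype.mk_le_mk]

-- p is one of the two canonical pair elements
lemma mem_pair_of_three {x y : β} (hxy : x ≠ y) {p u v : β}
    (hp : p ∈ g {x, y}) (hu : u ∈ g {x, y}) (hv : v ∈ g {x, y}) (huv : u ≠ v) :
    p = u ∨ p = v := by
  obtain ⟨f⟩ := (hg2 {x, y}).2
  have key : ∀ (a b : β) (ha : a ∈ g {x,y}) (hb : b ∈ g {x,y}),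
      (f ⟨a, ha⟩).1 = (f ⟨b, hb⟩).1 → a = b := by
    intro a b ha hb hh
    have := f.injective (Subtype.ext hh)
    exact congrArg Subtype.val this
  have mem : ∀ (a : β) (ha : a ∈ g {x,y}), (f ⟨a, ha⟩).1 = x ∨ (f ⟨a, ha⟩).1 = y := by
    intro a ha
    have h := (f ⟨a, ha⟩).2
    exact (Set.mem_insert_iff.mp h).imp id Set.mem_singleton_iff.mp
  rcases mem p hp with h1 | h1 <;> rcases mem u hu with h2 | h2 <;>
    rcases mem v hv with h3 | h3
  · exact Or.inl (key _ _ _ _ (h1.trans h2.symm))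
  · exact Or.inl (key _ _ _ _ (h1.trans h2.symm))
  · exact Or.inr (key _ _ _ _ (h1.trans h3.symm))
  · exact absurd (key _ _ _ _ (h2.trans h3.symm)) huv
  · exact absurd (key _ _ _ _ (h2.trans h3.symm)) huv
  · exact Or.inr (key _ _ _ _ (h1.trans h3.symm))
  · exact Or.inl (key _ _ _ _ (h1.trans h2.symm))
  · exact Or.inl (key _ _ _ _ (h1.trans h2.symm))

lemma gpair_chain {p : β} (hp : ∀ P : Set β, P.Nonempty → p ∈ g P) {x y : β} (hxy : x < y) :
    ∃ q ∈ g {x, y}, p < q ∨ q < p := by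
  obtain ⟨u, hu, v, hv, huv, i1, i2⟩ := pair_in_g hg1 hg2 x y hxy.ne
  have huv' : u < v := lt_of_le_of_ne (i1.1 hxy.le) huv
  have hpm : p ∈ g {x, y} := hp _ ⟨x, by simp⟩
  rcases mem_pair_of_three hg1 hg2 hxy.ne hpm hu hv huv with rfl | rfl
  · exact ⟨v, hv, Or.inl huv'⟩
  · exact ⟨u, hu, Or.inr huv'⟩

lemma gpair_anti {p : β} (hp : ∀ P : Set β, P.Nonempty → p ∈ g P) {x y : β}
    (hxy : ¬ x ≤ y) (hyx : ¬ y ≤ x) :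
    ∃ r ∈ g {x, y}, ¬ p ≤ r ∧ ¬ r ≤ p := by
  have hne : x ≠ y := fun h => hxy (le_of_eq h)
  obtain ⟨u, hu, v, hv, huv, i1, i2⟩ := pair_in_g hg1 hg2 x y hne
  have h1 : ¬ u ≤ v := fun h => hxy (i1.2 h)
  have h2 : ¬ v ≤ u := fun h => hyx (i2.2 h)
  have hpm : p ∈ g {x, y} := hp _ ⟨x, by simp⟩
  rcases mem_pair_of_three hg1 hg2 hne hpm hu hv huv with rfl | rfl
  · exact ⟨v, hv, h1, h2⟩
  · exact ⟨u, hu, h2, h1⟩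

section shapes
omit hg1 hg2

variable {T : Set β} {p q r : β}

-- helper: transfer of order along an embedding into a 3-element pattern
lemma emb_transfer {T' : Set β} (f : ↥T ↪o ↥T') {a b : β} (ha : a ∈ T) (hb : b ∈ T) :
    ((f ⟨a, ha⟩ : ↥T') : β) ≤ (f ⟨b, hb⟩ : ↥T') ↔ a ≤ b := by
  simp only [Subtype.coe_le_coe, OrderEmbedding.le_iff_le, Subtype.mk_le_mk]

lemma emb_ne {T' : Set β} (f : ↥T ↪o ↥T') {a b : β} (ha : a ∈ T) (hb : b ∈ T) (hab : a ≠ b) :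
    ((f ⟨a, ha⟩ : ↥T') : β) ≠ (f ⟨b, hb⟩ : ↥T') := by
  intro hh
  exact hab (congrArg Subtype.val (f.injective (Subtype.ext hh)))

lemma mem3 {m o₁ o₂ : β} (z : ↥({m, o₁, o₂} : Set β)) : (z : β) = m ∨ (z : β) = o₁ ∨ (z : β) = o₂ := by
  have := z.2
  simp only [Set.mem_insert_iff, Set.mem_singleton_iff] at this
  exact this

lemma V_shape {m o₁ o₂ : β} (f : ↥T ↪o ↥({m, o₁, o₂} : Set β))
    (hm1 : m < o₁) (hm2 : m < o₂) (h12 : ¬ o₁ ≤ o₂) (h21 : ¬ o₂ ≤ o₁)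
    (hp : p ∈ T) (hq : q ∈ T) (hr : r ∈ T)
    (hpq : p ≠ q) (hqr : q ≠ r)
    (hpr1 : ¬ p ≤ r) (hpr2 : ¬ r ≤ p) :
    q ≤ p ∧ q ≤ r := by
  set FP := f ⟨p, hp⟩ with hFP
  set FQ := f ⟨q, hq⟩ with hFQ
  set FR := f ⟨r, hr⟩ with hFR
  have hpr : p ≠ r := fun h => hpr1 (le_of_eq h)
  have tpr : ¬ (FP : β) ≤ (FR : β) := fun h => hpr1 ((emb_transfer f hp hr).1 h)
  have trp : ¬ (FR : β) ≤ (FP : β) := fun h => hpr2 ((emb_transfer f hr hp).1 h)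
  have dPQ := emb_ne f hp hq hpq
  have dQR := emb_ne f hq hr hqr
  have dPR := emb_ne f hp hr hpr
  -- FP ≠ m
  have hPm : (FP : β) ≠ m := by
    intro h
    rcases mem3 FR with h' | h' | h'
    · exact dPR (h.trans h'.symm)
    · exact tpr (by rw [h, h']; exact hm1.le)
    · exact tpr (by rw [h, h']; exact hm2.le)
  have hRm : (FR : β) ≠ m := by
    intro h
    rcases mem3 FP with h' | h' | h'
    · exact dPR (h'.trans h.symm)
    · exact trp (by rw [h, h']; exact hm1.le)
    · exact trp (by rw [h, h']; exact hm2.le)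
  have hQm : (FQ : β) = m := by
    rcases mem3 FQ with h | h | h
    · exact h
    · -- FQ = o₁ : then FP, FR ∈ {m, o₂} minus m ⇒ both o₂, contradiction
      exfalso
      rcases mem3 FP with h1 | h1 | h1
      · exact hPm h1
      · exact dPQ (h1.trans h.symm)
      · rcases mem3 FR with h2 | h2 | h2
        · exact hRm h2
        · exact dQR (h.trans h2.symm)
        · exact dPR (h1.trans h2.symm)
    · exfalso
      rcases mem3 FP with h1 | h1 | h1
      · exact hPm h1
      · rcases mem3 FR with h2 | h2 | h2
        · exact hRm h2
        · exact dPR (h1.trans h2.symm)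
        · exact dQR (h.trans h2.symm)
      · exact dPQ (h1.trans h.symm)
  constructor
  · refine (emb_transfer f hq hp).1 ?_
    rw [hQm]
    rcases mem3 FP with h | h | h
    · exact absurd h hPm
    · rw [h]; exact hm1.le
    · rw [h]; exact hm2.le
  · refine (emb_transfer f hq hr).1 ?_
    rw [hQm]
    rcases mem3 FR with h | h | h
    · exact absurd h hRm
    · rw [h]; exact hm1.le
    · rw [h]; exact hm2.le

lemma L_shape {m o₁ o₂ : β} (f : ↥T ↪o ↥({m, o₁, o₂} : Set β))
    (hm1 : o₁ < m) (hm2 : o₂ < m) (h12 : ¬ o₁ ≤ o₂) (h21 : ¬ o₂ ≤ o₁)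
    (hp : p ∈ T) (hq : q ∈ T) (hr : r ∈ T)
    (hpq : p ≠ q) (hqr : q ≠ r)
    (hpr1 : ¬ p ≤ r) (hpr2 : ¬ r ≤ p) :
    p ≤ q ∧ r ≤ q := by
  set FP := f ⟨p, hp⟩ with hFP
  set FQ := f ⟨q, hq⟩ with hFQ
  set FR := f ⟨r, hr⟩ with hFR
  have hpr : p ≠ r := fun h => hpr1 (le_of_eq h)
  have tpr : ¬ (FP : β) ≤ (FR : β) := fun h => hpr1 ((emb_transfer f hp hr).1 h)
  have trp : ¬ (FR : β) ≤ (FP : β) := fun h => hpr2 ((emb_transfer f hr hp).1 h)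
  have dPQ := emb_ne f hp hq hpq
  have dQR := emb_ne f hq hr hqr
  have dPR := emb_ne f hp hr hpr
  have hPm : (FP : β) ≠ m := by
    intro h
    rcases mem3 FR with h' | h' | h'
    · exact dPR (h.trans h'.symm)
    · exact trp (by rw [h, h']; exact hm1.le)
    · exact trp (by rw [h, h']; exact hm2.le)
  have hRm : (FR : β) ≠ m := by
    intro h
    rcases mem3 FP with h' | h' | h'
    · exact dPR (h'.trans h.symm)
    · exact tpr (by rw [h, h']; exact hm1.le)
    · exact tpr (by rw [h, h']; exact hm2.le)
  have hQm : (FQ : β) = m := by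
    rcases mem3 FQ with h | h | h
    · exact h
    · exfalso
      rcases mem3 FP with h1 | h1 | h1
      · exact hPm h1
      · exact dPQ (h1.trans h.symm)
      · rcases mem3 FR with h2 | h2 | h2
        · exact hRm h2
        · exact dQR (h.trans h2.symm)
        · exact dPR (h1.trans h2.symm)
    · exfalso
      rcases mem3 FP with h1 | h1 | h1
      · exact hPm h1
      · rcases mem3 FR with h2 | h2 | h2
        · exact hRm h2
        · exact dPR (h1.trans h2.symm)
        · exact dQR (h.trans h2.symm)
      · exact dPQ (h1.trans h.symm)
  constructor
  · refine (emb_transfer f hp hq).1 ?_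
    rw [hQm]
    rcases mem3 FP with h | h | h
    · exact absurd h hPm
    · rw [h]; exact hm1.le
    · rw [h]; exact hm2.le
  · refine (emb_transfer f hr hq).1 ?_
    rw [hQm]
    rcases mem3 FR with h | h | h
    · exact absurd h hRm
    · rw [h]; exact hm1.le
    · rw [h]; exact hm2.le

lemma E_shape {u v t : β} (f : ↥T ↪o ↥({u, v, t} : Set β))
    (huv : u < v) (htu : ¬ t ≤ u) (hut : ¬ u ≤ t) (htv : ¬ t ≤ v) (hvt : ¬ v ≤ t)
    (hp : p ∈ T) (hq : q ∈ T) (hr : r ∈ T)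
    (hpq : p ≠ q) (hqr : q ≠ r)
    (hpqc : p ≤ q ∨ q ≤ p)
    (hpr1 : ¬ p ≤ r) (hpr2 : ¬ r ≤ p) :
    ¬ q ≤ r ∧ ¬ r ≤ q := by
  set FP := f ⟨p, hp⟩ with hFP
  set FQ := f ⟨q, hq⟩ with hFQ
  set FR := f ⟨r, hr⟩ with hFR
  have hpr : p ≠ r := fun h => hpr1 (le_of_eq h)
  have tpr : ¬ (FP : β) ≤ (FR : β) := fun h => hpr1 ((emb_transfer f hp hr).1 h)
  have trp : ¬ (FR : β) ≤ (FP : β) := fun h => hpr2 ((emb_transfer f hr hp).1 h)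
  have dPQ := emb_ne f hp hq hpq
  have dQR := emb_ne f hq hr hqr
  have dPR := emb_ne f hp hr hpr
  have tpq : (FP : β) ≤ (FQ : β) ∨ (FQ : β) ≤ (FP : β) := by
    rcases hpqc with h | h
    · exact Or.inl ((emb_transfer f hp hq).2 h)
    · exact Or.inr ((emb_transfer f hq hp).2 h)
  -- FP ≠ t
  have hPt : (FP : β) ≠ t := by
    intro h
    rcases mem3 FQ with h' | h' | h'
    · rcases tpq with hh | hh
      · rw [h, h'] at hh; exact htu hh
      · rw [h, h'] at hh; exact hut hh
    · rcases tpq with hh | hh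
      · rw [h, h'] at hh; exact htv hh
      · rw [h, h'] at hh; exact hvt hh
    · exact dPQ (h.trans h'.symm)
  have hRt : (FR : β) = t := by
    rcases mem3 FR with h | h | h
    · -- FR = u; then FP ∈ {v,t}, FP ≠ t so FP = v, but then FR ≤ FP
      exfalso
      rcases mem3 FP with h1 | h1 | h1
      · exact dPR (h1.trans h.symm)
      · exact trp (by rw [h, h1]; exact huv.le)
      · exact hPt h1
    · exfalso
      rcases mem3 FP with h1 | h1 | h1
      · exact tpr (by rw [h, h1]; exact huv.le)
      · exact dPR (h1.trans h.symm)
      · exact hPt h1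
    · exact h
  have hQt : (FQ : β) ≠ t := fun h => dQR (h.trans hRt.symm)
  constructor
  · intro hh
    have : (FQ : β) ≤ (FR : β) := (emb_transfer f hq hr).2 hh
    rw [hRt] at this
    rcases mem3 FQ with h | h | h
    · exact hut (h ▸ this)
    · exact hvt (h ▸ this)
    · exact hQt h
  · intro hh
    have : (FR : β) ≤ (FQ : β) := (emb_transfer f hr hq).2 hh
    rw [hRt] at this
    rcases mem3 FQ with h | h | h
    · exact htu (h ▸ this)
    · exact htv (h ▸ this)
    · exact hQt h

end shapes


lemma subset_g {P Q : Set β} (h : P ⊆ Q) : g P ⊆ g Q := (hg1 _ _).1 ⟨inclEmb h⟩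

lemma no_V_and_L {x a b c d e : β}
    (hxa : x < a) (hxb : x < b) (hab : ¬ a ≤ b) (hba : ¬ b ≤ a)
    (hdc : d < c) (hec : e < c) (hde : ¬ d ≤ e) (hed : ¬ e ≤ d) : False := by
  obtain ⟨p, hp⟩ := exists_point hg1 hg2 x
  obtain ⟨q, hqm, hq⟩ := gpair_chain hg1 hg2 hp hxa
  obtain ⟨r, hrm, hr1, hr2⟩ := gpair_anti hg1 hg2 hp hab hba
  have hpm1 : p ∈ g {x, a} := hp _ ⟨x, by simp⟩
  have hpm2 : p ∈ g {a, b} := hp _ ⟨a, by simp⟩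
  have hpq : p ≠ q := by rcases hq with h | h; exacts [h.ne, h.ne']
  have hqr : q ≠ r := by
    rintro rfl
    rcases hq with h | h
    · exact hr1 h.le
    · exact hr2 h.le
  -- V side : q ≤ p ∧ q ≤ r
  have sub1 : g {x, a} ⊆ g ({x, a, b} : Set β) := subset_g hg1 hg2 (by
    intro z hz; rcases hz with rfl | rfl <;> simp [Set.mem_insert_iff, Set.mem_singleton_iff])
  have sub2 : g {a, b} ⊆ g ({x, a, b} : Set β) := subset_g hg1 hg2 (by
    intro z hz; rcases hz with rfl | rfl <;> simp [Set.mem_insert_iff, Set.mem_singleton_iff])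
  obtain ⟨fV⟩ := (hg2 ({x, a, b} : Set β)).2
  have hVres := V_shape fV hxa hxb hab hba (sub1 hpm1) (sub1 hqm) (sub2 hrm) hpq hqr hr1 hr2
  -- Λ side : p ≤ q ∧ r ≤ q
  have mc : c ∈ ({c, d, e} : Set β) := by simp
  have md : d ∈ ({c, d, e} : Set β) := by simp
  have me : e ∈ ({c, d, e} : Set β) := by simp
  have sub3 : g {x, a} ⊆ g ({c, d, e} : Set β) :=
    (hg1 _ _).1 ⟨emb_pair md mc hxa.ne (iff_of_true hxa.le hdc.le)
      (iff_of_false hxa.not_ge hdc.not_ge)⟩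
  have sub4 : g {a, b} ⊆ g ({c, d, e} : Set β) :=
    (hg1 _ _).1 ⟨emb_pair md me (fun h => hab h.le) (iff_of_false hab hde)
      (iff_of_false hba hed)⟩
  obtain ⟨fL⟩ := (hg2 ({c, d, e} : Set β)).2
  have hLres := L_shape fL hdc hec hde hed (sub3 hpm1) (sub3 hqm) (sub4 hrm) hpq hqr hr1 hr2
  exact hpq (le_antisymm hLres.1 hVres.1)

lemma no_V_and_E {x a b u v t : β}
    (hxa : x < a) (hxb : x < b) (hab : ¬ a ≤ b) (hba : ¬ b ≤ a)
    (huv : u < v) (htu : ¬ t ≤ u) (hut : ¬ u ≤ t) (htv : ¬ t ≤ v) (hvt : ¬ v ≤ t) : False := by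
  obtain ⟨p, hp⟩ := exists_point hg1 hg2 x
  obtain ⟨q, hqm, hq⟩ := gpair_chain hg1 hg2 hp hxa
  obtain ⟨r, hrm, hr1, hr2⟩ := gpair_anti hg1 hg2 hp hab hba
  have hpm1 : p ∈ g {x, a} := hp _ ⟨x, by simp⟩
  have hpm2 : p ∈ g {a, b} := hp _ ⟨a, by simp⟩
  have hpq : p ≠ q := by rcases hq with h | h; exacts [h.ne, h.ne']
  have hqr : q ≠ r := by
    rintro rfl
    rcases hq with h | h
    · exact hr1 h.le
    · exact hr2 h.le
  -- V side : q ≤ p ∧ q ≤ r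
  have sub1 : g {x, a} ⊆ g ({x, a, b} : Set β) := subset_g hg1 hg2 (by
    intro z hz; rcases hz with rfl | rfl <;> simp [Set.mem_insert_iff, Set.mem_singleton_iff])
  have sub2 : g {a, b} ⊆ g ({x, a, b} : Set β) := subset_g hg1 hg2 (by
    intro z hz; rcases hz with rfl | rfl <;> simp [Set.mem_insert_iff, Set.mem_singleton_iff])
  obtain ⟨fV⟩ := (hg2 ({x, a, b} : Set β)).2
  have hVres := V_shape fV hxa hxb hab hba (sub1 hpm1) (sub1 hqm) (sub2 hrm) hpq hqr hr1 hr2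
  -- E side : ¬ q ≤ r
  have mu : u ∈ ({u, v, t} : Set β) := by simp
  have mv : v ∈ ({u, v, t} : Set β) := by simp
  have mt : t ∈ ({u, v, t} : Set β) := by simp
  have sub3 : g {x, a} ⊆ g ({u, v, t} : Set β) :=
    (hg1 _ _).1 ⟨emb_pair mu mv hxa.ne (iff_of_true hxa.le huv.le)
      (iff_of_false hxa.not_ge huv.not_ge)⟩
  have sub4 : g {a, b} ⊆ g ({u, v, t} : Set β) :=
    (hg1 _ _).1 ⟨emb_pair mu mt (fun h => hab h.le) (iff_of_false hab hut)
      (iff_of_false hba htu)⟩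
  obtain ⟨fE⟩ := (hg2 ({u, v, t} : Set β)).2
  have hpqc : p ≤ q ∨ q ≤ p := by rcases hq with h | h; exacts [Or.inl h.le, Or.inr h.le]
  have hEres := E_shape fE huv htu hut htv hvt (sub3 hpm1) (sub3 hqm) (sub4 hrm) hpq hqr hpqc hr1 hr2
  have hqler : q ≤ r := hVres.2
  exact hEres.1 hqler


lemma no_omega {s : ℕ → β} {a b : β}
    (hs : StrictMono s) (hsa : ∀ n, s n < a) (hsb : ∀ n, s n < b)
    (hab : ¬ a ≤ b) (hba : ¬ b ≤ a) : False := by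
  classical
  obtain ⟨p, hp⟩ := exists_point hg1 hg2 a
  obtain ⟨r, hrm, hr1, hr2⟩ := gpair_anti hg1 hg2 hp hab hba
  set S : Set β := Set.range s with hS
  set T : Set β := S ∪ {a, b} with hT
  have hST : S ⊆ T := Set.subset_union_left
  have habT : ({a, b} : Set β) ⊆ T := Set.subset_union_right
  have subS : g S ⊆ g T := subset_g hg1 hg2 hST
  have subab : g {a, b} ⊆ g T := subset_g hg1 hg2 habT
  have hpS : p ∈ g S := hp _ ⟨s 0, ⟨0, rfl⟩⟩
  have hpT : p ∈ g T := subS hpS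
  have hrT : r ∈ g T := subab hrm
  obtain ⟨f⟩ := (hg2 T).2
  obtain ⟨f₂⟩ := (hg2 S).1
  obtain ⟨f₁⟩ := (hg2 S).2
  -- classify elements of T
  have memT : ∀ z : ↥T, (∃ n, s n = (z : β)) ∨ (z : β) = a ∨ (z : β) = b := by
    intro z
    rcases z.2 with h | h
    · exact Or.inl h
    · rcases h with h | h
      · exact Or.inr (Or.inl h)
      · exact Or.inr (Or.inr h)
  -- the image of p under f is a or b
  have hFP : ((f ⟨p, hpT⟩ : ↥T) : β) = a ∨ ((f ⟨p, hpT⟩ : ↥T) : β) = b := by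
    have tpr : ¬ ((f ⟨p, hpT⟩ : ↥T) : β) ≤ ((f ⟨r, hrT⟩ : ↥T) : β) :=
      fun h => hr1 ((emb_transfer f hpT hrT).1 h)
    have trp : ¬ ((f ⟨r, hrT⟩ : ↥T) : β) ≤ ((f ⟨p, hpT⟩ : ↥T) : β) :=
      fun h => hr2 ((emb_transfer f hrT hpT).1 h)
    rcases memT (f ⟨p, hpT⟩) with ⟨n, hn⟩ | h
    · exfalso
      rcases memT (f ⟨r, hrT⟩) with ⟨m, hm⟩ | hm | hm
      · rcases le_total n m with h | h
        · exact tpr (by rw [← hn, ← hm]; exact hs.monotone h)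
        · exact trp (by rw [← hn, ← hm]; exact hs.monotone h)
      · exact tpr (by rw [← hn, hm]; exact (hsa n).le)
      · exact tpr (by rw [← hn, hm]; exact (hsb n).le)
    · exact h
  -- p is maximal in g T
  have pmax : ∀ z, (hz : z ∈ g T) → ¬ p < z := by
    intro z hz hpz
    have h1 : (f ⟨p, hpT⟩ : ↥T) < f ⟨z, hz⟩ := by
      rw [f.lt_iff_lt]; exact Subtype.mk_lt_mk.2 hpz
    have h2 : ((f ⟨p, hpT⟩ : ↥T) : β) < ((f ⟨z, hz⟩ : ↥T) : β) := h1
    rcases memT (f ⟨z, hz⟩) with ⟨m, hm⟩ | hm | hm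
    · rcases hFP with h | h
      · rw [h, ← hm] at h2; exact absurd (h2.trans (hsa m)) (lt_irrefl a)
      · rw [h, ← hm] at h2; exact absurd (h2.trans (hsb m)) (lt_irrefl b)
    · rcases hFP with h | h
      · rw [h, hm] at h2; exact lt_irrefl a h2
      · rw [h, hm] at h2; exact hba h2.le
    · rcases hFP with h | h
      · rw [h, hm] at h2; exact hab h2.le
      · rw [h, hm] at h2; exact lt_irrefl b h2
  -- g S is a chain, so everything in g S is ≤ p
  have chain : ∀ z, (hz : z ∈ g S) → z ≤ p := by
    intro z hz
    have hcmp : z ≤ p ∨ p ≤ z := by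
      have m1 := (f₁ ⟨z, hz⟩).2
      have m2 := (f₁ ⟨p, hpS⟩).2
      obtain ⟨n, hn⟩ := m1
      obtain ⟨m, hm⟩ := m2
      rcases le_total n m with h | h
      · left
        refine (emb_transfer f₁ hz hpS).1 ?_
        rw [← hn, ← hm]; exact hs.monotone h
      · right
        refine (emb_transfer f₁ hpS hz).1 ?_
        rw [← hm, ← hn]; exact hs.monotone h
    rcases hcmp with h | h
    · exact h
    · rcases eq_or_lt_of_le h with h' | h'
      · exact le_of_eq h'.symm
      · exact absurd h' (pmax z (subS hz))
  -- index function
  have idx : ∀ u : ↥S, ∃ n, s n = (u : β) := fun u => u.2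
  let I : ↥S → ℕ := fun u => (idx u).choose
  have hI : ∀ u : ↥S, s (I u) = (u : β) := fun u => (idx u).choose_spec
  let F : ℕ → ℕ := fun n => I (f₁ (f₂ ⟨s n, ⟨n, rfl⟩⟩))
  have hFmono : StrictMono F := by
    intro n m hnm
    have h1 : (⟨s n, ⟨n, rfl⟩⟩ : ↥S) < ⟨s m, ⟨m, rfl⟩⟩ := Subtype.mk_lt_mk.2 (hs hnm)
    have h2 : f₁ (f₂ ⟨s n, ⟨n, rfl⟩⟩) < f₁ (f₂ ⟨s m, ⟨m, rfl⟩⟩) := by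
      rw [f₁.lt_iff_lt, f₂.lt_iff_lt]; exact h1
    have h3 : ((f₁ (f₂ ⟨s n, ⟨n, rfl⟩⟩)) : β) < ((f₁ (f₂ ⟨s m, ⟨m, rfl⟩⟩)) : β) := h2
    have := hI (f₁ (f₂ ⟨s n, ⟨n, rfl⟩⟩))
    have h4 : s (F n) < s (F m) := by
      show s (I _) < s (I _)
      rw [hI, hI]; exact h3
    exact hs.lt_iff_lt.1 h4
  -- bound
  set N : ℕ := I (f₁ ⟨p, hpS⟩) with hN
  have hbound : ∀ n, F n ≤ N := by
    intro n
    have h1 : ((f₂ ⟨s n, ⟨n, rfl⟩⟩ : ↥(g S)) : β) ≤ p := chain _ (f₂ ⟨s n, ⟨n, rfl⟩⟩).2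
    have h2 : (f₂ ⟨s n, ⟨n, rfl⟩⟩ : ↥(g S)) ≤ ⟨p, hpS⟩ := h1
    have h3 : f₁ (f₂ ⟨s n, ⟨n, rfl⟩⟩) ≤ f₁ ⟨p, hpS⟩ := f₁.monotone h2
    have h4 : ((f₁ (f₂ ⟨s n, ⟨n, rfl⟩⟩)) : β) ≤ ((f₁ ⟨p, hpS⟩ : ↥S) : β) := h3
    have h5 : s (F n) ≤ s N := by
      show s (I _) ≤ s (I _)
      rw [hI, hI]; exact h4
    exact hs.le_iff_le.1 h5
  have : N + 1 ≤ F (N + 1) := hFmono.le_apply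
  have := hbound (N + 1)
  omega


lemma flower_of_g {x₀ a₀ b₀ : β}
    (hv1 : x₀ < a₀) (hv2 : x₀ < b₀) (hv3 : ¬ a₀ ≤ b₀) (hv4 : ¬ b₀ ≤ a₀) : IsFlower β := by
  classical
  have noL : ∀ c d e : β, d < c → e < c → ¬ d ≤ e → ¬ e ≤ d → False :=
    fun c d e hdc hec hde hed => no_V_and_L hg1 hg2 hv1 hv2 hv3 hv4 hdc hec hde hed
  have noE : ∀ u v t : β, u < v → ¬ t ≤ u → ¬ u ≤ t → ¬ t ≤ v → ¬ v ≤ t → False :=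
    fun u v t h1 h2 h3 h4 h5 => no_V_and_E hg1 hg2 hv1 hv2 hv3 hv4 h1 h2 h3 h4 h5
  have noInf : ∀ (s : ℕ → β) (a b : β), StrictMono s → (∀ n, s n < a) → (∀ n, s n < b) →
      ¬ a ≤ b → ¬ b ≤ a → False :=
    fun s a b hs ha hb hh hh' => no_omega hg1 hg2 hs ha hb hh hh'
  -- every element is comparable to every non-maximal element
  have comp_all : ∀ t z : β, (∃ w, z < w) → (t ≤ z ∨ z ≤ t) := by
    rintro t z ⟨w, hzw⟩
    by_contra hcon
    push_neg at hcon
    obtain ⟨htz, hzt⟩ := hcon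
    by_cases htw : t ≤ w
    · have htw' : t < w := lt_of_le_of_ne htw (by rintro rfl; exact hzt hzw.le)
      exact noL w t z htw' hzw htz hzt
    · by_cases hwt : w ≤ t
      · exact hzt (hzw.le.trans hwt)
      · exact noE z w t hzw htz hzt htw hwt
  set B : Set β := {z | ∃ c d, z < c ∧ z < d ∧ ¬ c ≤ d ∧ ¬ d ≤ c} with hB
  have hx₀B : x₀ ∈ B := ⟨a₀, b₀, hv1, hv2, hv3, hv4⟩
  have below_ab : ∀ z ∈ B, z < a₀ ∧ z < b₀ := by
    rintro z ⟨c, d, hzc, hzd, hcd, hdc⟩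
    have hca : a₀ ≤ z ∨ z ≤ a₀ := comp_all a₀ z ⟨c, hzc⟩
    have hcb : b₀ ≤ z ∨ z ≤ b₀ := comp_all b₀ z ⟨c, hzc⟩
    rcases hca with hca | hca
    · exfalso
      rcases hcb with hcb | hcb
      · rcases eq_or_lt_of_le hca with h | h
        · exact hv4 (hcb.trans h.symm.le)
        · rcases eq_or_lt_of_le hcb with h' | h'
          · exact hv3 (hca.trans h'.symm.le)
          · exact noL z a₀ b₀ h h' hv3 hv4
      · exact hv3 (hca.trans hcb)
    · rcases hcb with hcb | hcb
      · exact (hv4 (hcb.trans hca)).elim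
      · constructor
        · refine lt_of_le_of_ne hca ?_
          rintro rfl
          exact hv3 hcb
        · refine lt_of_le_of_ne hcb ?_
          rintro rfl
          exact hv4 hca
  -- B has a greatest element
  have hBmax : ∃ x ∈ B, ∀ z ∈ B, z ≤ x := by
    by_contra hno
    push_neg at hno
    have step : ∀ u : ↥B, ∃ v : ↥B, u.1 < v.1 := by
      rintro ⟨u, hu⟩
      obtain ⟨z, hz, hzu⟩ := hno u hu
      obtain ⟨c, cd, huc, -⟩ := hu
      have : z ≤ u ∨ u ≤ z := comp_all z u ⟨c, huc⟩
      rcases this with h | h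
      · exact absurd h hzu
      · exact ⟨⟨z, hz⟩, lt_of_le_of_ne h (by rintro rfl; exact hzu le_rfl)⟩
    choose F hF using step
    let seq : ℕ → ↥B := fun n => F^[n] ⟨x₀, hx₀B⟩
    have hseq : StrictMono (fun n => (seq n).1) := by
      apply strictMono_nat_of_lt_succ
      intro n
      have : seq (n + 1) = F (seq n) := Function.iterate_succ_apply' F n _
      rw [this]
      exact hF (seq n)
    exact noInf _ a₀ b₀ hseq (fun n => (below_ab _ (seq n).2).1)
      (fun n => (below_ab _ (seq n).2).2) hv3 hv4
  obtain ⟨x, hxB, hxmax⟩ := hBmax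
  obtain ⟨a, b, hxa, hxb, hab, hba⟩ := hxB
  refine ⟨x, ?_, ?_, ?_, ?_, ?_⟩
  · -- chain below
    intro d hd e he hne
    by_contra hcon
    push_neg at hcon
    exact noL x d e hd he hcon.1 hcon.2
  · -- every nonempty subset below x has a greatest element
    intro S hS hSne
    by_contra hno
    push_neg at hno
    have step : ∀ u : ↥S, ∃ v : ↥S, u.1 < v.1 := by
      rintro ⟨u, hu⟩
      obtain ⟨z, hz, hzu⟩ := hno u hu
      have : z ≤ u ∨ u ≤ z := comp_all z u ⟨x, hS hu⟩
      rcases this with h | h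
      · exact absurd h hzu
      · exact ⟨⟨z, hz⟩, lt_of_le_of_ne h (by rintro rfl; exact hzu le_rfl)⟩
    choose F hF using step
    obtain ⟨u₀, hu₀⟩ := hSne
    let seq : ℕ → ↥S := fun n => F^[n] ⟨u₀, hu₀⟩
    have hseq : StrictMono (fun n => (seq n).1) := by
      apply strictMono_nat_of_lt_succ
      intro n
      have : seq (n + 1) = F (seq n) := Function.iterate_succ_apply' F n _
      rw [this]
      exact hF (seq n)
    exact noInf _ a b hseq (fun n => lt_trans (hS (seq n).2) hxa)
      (fun n => lt_trans (hS (seq n).2) hxb) hab hba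
  · -- antichain above
    intro y hy z hz hne hyz
    have hy' : x < y := hy
    have hz' : x < z := hz
    have hylz : y < z := lt_of_le_of_ne hyz hne
    have hyB : y ∈ B := by
      have hay : a ≤ y ∨ y ≤ a := comp_all a y ⟨z, hylz⟩
      have hby : b ≤ y ∨ y ≤ b := comp_all b y ⟨z, hylz⟩
      have hya : y < a := by
        rcases hay with h | h
        · exfalso
          rcases hby with h' | h'
          · rcases eq_or_lt_of_le h with hh | hh
            · exact hba (by rw [← hh] at h'; exact h')
            · rcases eq_or_lt_of_le h' with hh' | hh'
              · exact hab (by rw [← hh'] at h; exact h)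
              · exact noL y a b hh hh' hab hba
          · exact hab (h.trans h')
        · refine lt_of_le_of_ne h ?_
          rintro rfl
          rcases hby with h' | h'
          · exact hba h'
          · exact hab h'
      have hyb : y < b := by
        rcases hby with h | h
        · exact ((hba (h.trans hya.le))).elim
        · refine lt_of_le_of_ne h ?_
          rintro rfl
          exact hba hya.le
      exact ⟨a, b, hya, hyb, hab, hba⟩
    exact absurd (hxmax y hyB) (not_le_of_gt hy')
  · exact ⟨a, hxa, b, hxb, fun h => hab h.le⟩
  · intro y
    rcases comp_all y x ⟨a, hxa⟩ with h | h
    · rcases eq_or_lt_of_le h with h' | h'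
      · exact Or.inr (Or.inl h')
      · exact Or.inl h'
    · rcases eq_or_lt_of_le h with h' | h'
      · exact Or.inr (Or.inl h'.symm)
      · exact Or.inr (Or.inr h')


section dualpart
omit hg1 hg2

variable {β : Type*} [PartialOrder β]

def sdual (P : Set β) : Set βᵒᵈ := {x : βᵒᵈ | OrderDual.ofDual x ∈ P}
def sundual (P : Set βᵒᵈ) : Set β := {x : β | OrderDual.toDual x ∈ P}

lemma sundual_sdual (P : Set β) : sundual (sdual P) = P := rfl
lemma sdual_sundual (P : Set βᵒᵈ) : sdual (sundual P) = P := rfl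

def dualEmb {P Q : Set β} (f : ↥P ↪o ↥Q) : ↥(sdual P) ↪o ↥(sdual Q) := by
  refine OrderEmbedding.ofMapLEIff
    (fun u => ⟨OrderDual.toDual (f ⟨OrderDual.ofDual u.1, u.2⟩ : ↥Q), (f ⟨OrderDual.ofDual u.1, u.2⟩).2⟩) ?_
  rintro ⟨u, hu⟩ ⟨v, hv⟩
  simp only [Subtype.mk_le_mk]
  show (f ⟨OrderDual.ofDual v, hv⟩ : β) ≤ (f ⟨OrderDual.ofDual u, hu⟩ : β) ↔ _
  rw [Subtype.coe_le_coe, f.le_iff_le]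
  rfl

def undualEmb {P Q : Set βᵒᵈ} (f : ↥P ↪o ↥Q) : ↥(sundual P) ↪o ↥(sundual Q) := by
  refine OrderEmbedding.ofMapLEIff
    (fun u => ⟨OrderDual.ofDual (f ⟨OrderDual.toDual u.1, u.2⟩ : ↥Q), (f ⟨OrderDual.toDual u.1, u.2⟩).2⟩) ?_
  rintro ⟨u, hu⟩ ⟨v, hv⟩
  simp only [Subtype.mk_le_mk]
  show (f ⟨OrderDual.toDual v, hv⟩ : βᵒᵈ) ≤ (f ⟨OrderDual.toDual u, hu⟩ : βᵒᵈ) ↔ _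
  rw [Subtype.coe_le_coe, f.le_iff_le]
  rfl

lemma subrep_dual (h : SubRepresentable β) : SubRepresentable βᵒᵈ := by
  obtain ⟨g, hg1, hg2⟩ := h
  refine ⟨fun P => sdual (g (sundual P)), ?_, ?_⟩
  · intro P₁ P₂
    constructor
    · intro ⟨f⟩
      have : Nonempty (↥(sundual P₁) ↪o ↥(sundual P₂)) := ⟨undualEmb f⟩
      have hsub := (hg1 _ _).1 this
      intro z hz
      exact hsub hz
    · intro hsub
      have : g (sundual P₁) ⊆ g (sundual P₂) := fun z hz => hsub hz
      obtain ⟨f⟩ := (hg1 _ _).2 this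
      have := dualEmb f
      rw [sdual_sundual, sdual_sundual] at this
      exact ⟨this⟩
  · intro P
    obtain ⟨⟨f1⟩, ⟨f2⟩⟩ := hg2 (sundual P)
    constructor
    · have := dualEmb f1
      rw [sdual_sundual] at this
      exact ⟨this⟩
    · have := dualEmb f2
      rw [sdual_sundual] at this
      exact ⟨this⟩

end dualpart

end SubRepAux


theorem subrep_implies_flower_coflower_or_chains (α : Type*) [PartialOrder α]
    (h : SubRepresentable α) :
    IsFlower α ∨ IsFlower αᵒᵈ ∨ IsDisjointUnionOfChains α := by
  by_cases hV : ∃ x a b : α, x < a ∧ x < b ∧ ¬ a ≤ b ∧ ¬ b ≤ a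
  · obtain ⟨x, a, b, h1, h2, h3, h4⟩ := hV
    obtain ⟨g, hg1, hg2⟩ := h
    exact Or.inl (SubRepAux.flower_of_g hg1 hg2 h1 h2 h3 h4)
  · by_cases hL : ∃ x a b : α, a < x ∧ b < x ∧ ¬ a ≤ b ∧ ¬ b ≤ a
    · obtain ⟨x, a, b, h1, h2, h3, h4⟩ := hL
      obtain ⟨g, hg1, hg2⟩ := SubRepAux.subrep_dual h
      refine Or.inr (Or.inl (SubRepAux.flower_of_g hg1 hg2 (x₀ := OrderDual.toDual x)
        (a₀ := OrderDual.toDual a) (b₀ := OrderDual.toDual b) ?_ ?_ ?_ ?_))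
      · exact OrderDual.toDual_lt_toDual.mpr h1
      · exact OrderDual.toDual_lt_toDual.mpr h2
      · exact fun hh => h4 (OrderDual.toDual_le_toDual.mp hh)
      · exact fun hh => h3 (OrderDual.toDual_le_toDual.mp hh)
    · refine Or.inr (Or.inr ?_)
      intro a b c hac hbc
      by_contra hcon
      push_neg at hcon
      obtain ⟨hab, hba⟩ := hcon
      rcases hac with hac | hac
      · rcases hbc with hbc | hbc
        · -- a ≤ c, b ≤ c : Λ
          have ha' : a < c := lt_of_le_of_ne hac (by rintro rfl; exact hba hbc)
          have hb' : b < c := lt_of_le_of_ne hbc (by rintro rfl; exact hab hac)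
          exact hL ⟨c, a, b, ha', hb', hab, hba⟩
        · exact hab (hac.trans hbc)
      · rcases hbc with hbc | hbc
        · exact hba (hbc.trans hac)
        · have ha' : c < a := lt_of_le_of_ne hac (by rintro rfl; exact hab hbc)
          have hb' : c < b := lt_of_le_of_ne hbc (by rintro rfl; exact hba hac)
          exact hV ⟨c, a, b, ha', hb', hab, hba⟩
end

section
/- The poset that is the disjoint union of a k-point chain for each k ∈ ℕ (one chain of each finite size, pairwise incomparable) is not sub-representable. -/
open Sigma

/-- The `n`-th chain component of the disjoint union. -/
def ChainSet (n : ℕ) : Set (Σ k : ℕ, Fin k) := {x | x.1 = n}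

lemma sig_eq_of_fst_eq {K : ℕ} (x : Σ k : ℕ, Fin k) (hx : x.1 = K) :
    x = ⟨K, Fin.cast hx x.2⟩ := by
  rcases x with ⟨k, i⟩
  subst hx
  rfl

/-- The `n`-th chain is order isomorphic to `Fin n`. -/
def chainIso (n : ℕ) : Fin n ≃o ↥(ChainSet n) where
  toFun i := ⟨⟨n, i⟩, rfl⟩
  invFun x := Fin.cast x.2 x.1.2
  left_inv i := rfl
  right_inv x := by
    rcases x with ⟨⟨k, i⟩, (hk : k = n)⟩
    subst hk
    rfl
  map_rel_iff' := by
    intro i j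
    exact (Subtype.mk_le_mk).trans Sigma.mk_le_mk_iff

/-- Shorter chains embed into longer ones. -/
def chainEmb {n m : ℕ} (h : n ≤ m) : ↥(ChainSet n) ↪o ↥(ChainSet m) :=
  ((chainIso n).symm.toOrderEmbedding.trans (Fin.castLEOrderEmb h)).trans
    (chainIso m).toOrderEmbedding

lemma chain_comparable (n : ℕ) (a b : ↥(ChainSet n)) : a ≤ b ∨ b ≤ a := by
  rcases le_total ((chainIso n).symm a) ((chainIso n).symm b) with h | h
  · exact Or.inl (((chainIso n).symm.le_iff_le).mp h)
  · exact Or.inr (((chainIso n).symm.le_iff_le).mp h)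

lemma sigma_fst_eq_of_le {x y : Σ k : ℕ, Fin k} (h : x ≤ y) : x.1 = y.1 :=
  (Sigma.le_def.mp h).1

/-- The disjoint union of one k-point chain for each k, with the disjoint-sum
(non-lex) order on the sigma type: elements of different chains are incomparable. -/
theorem disjoint_union_all_finite_chains_not_subrep :
    ¬ SubRepresentable (Σ k : ℕ, Fin k) := by
  rintro ⟨g, h1, h2⟩
  -- Fin n embeds into g (ChainSet n)
  have hembed : ∀ n : ℕ, Nonempty (Fin n ↪o ↥(g (ChainSet n))) := fun n =>
    (h2 (ChainSet n)).1.map fun f => (chainIso n).toOrderEmbedding.trans f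
  -- any two elements of g (ChainSet n) lie in the same component
  have hsame : ∀ n : ℕ, ∀ x ∈ g (ChainSet n), ∀ y ∈ g (ChainSet n), x.1 = y.1 := by
    intro n x hx y hy
    obtain ⟨f⟩ := (h2 (ChainSet n)).2
    have hcomp : (⟨x, hx⟩ : ↥(g (ChainSet n))) ≤ ⟨y, hy⟩ ∨
        (⟨y, hy⟩ : ↥(g (ChainSet n))) ≤ ⟨x, hx⟩ := by
      rcases chain_comparable n (f ⟨x, hx⟩) (f ⟨y, hy⟩) with h | h
      · exact Or.inl (f.le_iff_le.mp h)
      · exact Or.inr (f.le_iff_le.mp h)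
    rcases hcomp with h | h
    · exact sigma_fst_eq_of_le h
    · exact (sigma_fst_eq_of_le h).symm
  -- monotonicity
  have hmono : ∀ n m : ℕ, n ≤ m → g (ChainSet n) ⊆ g (ChainSet m) := fun n m h =>
    (h1 _ _).mp ⟨chainEmb h⟩
  -- pick the component K containing g (ChainSet 1)
  obtain ⟨f1⟩ := hembed 1
  set x₀ : Σ k : ℕ, Fin k := ((f1 0 : ↥(g (ChainSet 1))) : Σ k : ℕ, Fin k) with hx₀
  have hx₀mem : x₀ ∈ g (ChainSet 1) := (f1 0).2
  set K : ℕ := x₀.1 with hK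
  -- the chain of length K+1 must fit in component K
  obtain ⟨f⟩ := hembed (K + 1)
  have hx₀mem' : x₀ ∈ g (ChainSet (K + 1)) := hmono 1 (K + 1) (by omega) hx₀mem
  have hfst : ∀ i : Fin (K + 1), ((f i : ↥(g (ChainSet (K + 1)))) : Σ k : ℕ, Fin k).1 = K :=
    fun i => hsame (K + 1) _ (f i).2 x₀ hx₀mem'
  -- build an injection Fin (K+1) ↪ Fin K
  have hinj : Function.Injective (fun i : Fin (K + 1) =>
      Fin.cast (hfst i) ((f i : ↥(g (ChainSet (K + 1)))) : Σ k : ℕ, Fin k).2) := by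
    intro i j hij
    have h1' := sig_eq_of_fst_eq ((f i : ↥(g (ChainSet (K + 1)))) : Σ k : ℕ, Fin k) (hfst i)
    have h2' := sig_eq_of_fst_eq ((f j : ↥(g (ChainSet (K + 1)))) : Σ k : ℕ, Fin k) (hfst j)
    have : ((f i : ↥(g (ChainSet (K + 1)))) : Σ k : ℕ, Fin k) =
        ((f j : ↥(g (ChainSet (K + 1)))) : Σ k : ℕ, Fin k) := by
      simp only at hij
      rw [h1', h2', hij]
    have : f i = f j := Subtype.ext this
    exact f.injective this
  have := Fintype.card_le_of_injective _ hinj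
  simp [Fintype.card_fin] at this
end

section
/- Every finite poset that is a disjoint union of chains (any two elements comparable to a common element are themselves comparable) is sub-representable. -/
/-!
A finite disjoint union of chains is determined by its profile: the number of chains with more
than `k` elements, for each `k`. Listing the chains by decreasing length and sending an element to
the pair (index of its chain, number of elements below it) embeds the poset into countably many
disjoint copies of `ℕ`, with image exactly the Young diagram of the profile. An embedding maps
distinct chains into distinct chains that are at least as long, so one such poset embeds into
another iff its profile is pointwise smaller, i.e. iff its diagram is contained in the other's.
Hence `g P`, the preimage of the diagram of `P` under the cell map of the whole poset, is
isomorphic to `P`, and `g P₁ ⊆ g P₂` holds iff `P₁` embeds into `P₂`.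
-/

open Set OrderDual

theorem IsDisjointUnionOfChains.subtype {β : Type*} [PartialOrder β]
    (h : IsDisjointUnionOfChains β) (P : Set β) : IsDisjointUnionOfChains P :=
  fun a b c => h a b c

noncomputable def OrderEmbedding.preimageOrderIso {β γ : Type*} [PartialOrder β] [PartialOrder γ]
    (e : β ↪o γ) {S : Set γ} (hS : S ⊆ range e) : e ⁻¹' S ≃o S :=
  RelIso.ofSurjective (OrderEmbedding.ofMapLEIff (fun x => ⟨e x, x.2⟩) fun _ _ => e.le_iff_le)
    fun ⟨_, hy⟩ => by
      obtain ⟨x, rfl⟩ := hS hy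
      exact ⟨⟨x, hy⟩, rfl⟩

/-- `Σ _ : ℕ, ℕ` carries the disjoint-sum order: `⟨i, k⟩ ≤ ⟨j, l⟩ ↔ i = j ∧ k ≤ l`. -/
def diagram (f : ℕ → ℕ) : Set (Σ _ : ℕ, ℕ) := {x | x.1 < f x.2}

theorem diagram_mono : Monotone diagram := fun _ _ hf _ hx => hx.trans_le (hf _)

namespace ChainUnion

noncomputable def height {β : Type*} [PartialOrder β] (a : β) : ℕ := (Iio a).ncard

noncomputable def profile (β : Type*) [PartialOrder β] (k : ℕ) : ℕ :=
  {m : β | IsMax m ∧ k ≤ height m}.ncard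

variable {β γ : Type*} [PartialOrder β] [PartialOrder γ] [Finite β]

theorem height_le_height_of_orderEmbedding (e : γ ↪o β) (a : γ) : height a ≤ height (e a) :=
  ncard_le_ncard_of_injOn e (fun _ hx => e.lt_iff_lt.2 hx) e.injective.injOn

theorem height_strictMono : StrictMono (height : β → ℕ) := fun _ _ hab =>
  ncard_lt_ncard (Iio_ssubset_Iio hab)

theorem height_mono : Monotone (height : β → ℕ) := height_strictMono.monotone

theorem le_of_height_le {a b : β} (hab : a ≤ b ∨ b ≤ a) (hh : height a ≤ height b) : a ≤ b :=
  hab.elim id fun hba => (eq_or_lt_of_le hba).elim (fun e => e ▸ le_rfl)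
    fun hlt => absurd hh (height_strictMono hlt).not_ge

theorem ncard_Iic_eq_height_add_one (a : β) : (Iic a).ncard = height a + 1 := by
  rw [← Iio_insert, ncard_insert_of_notMem self_notMem_Iio]
  rfl

theorem exists_le_height_eq (h : IsDisjointUnionOfChains β) {a : β} {k : ℕ}
    (hk : k ≤ height a) : ∃ d ≤ a, height d = k := by
  have hinj : ∀ x ∈ Iic a, ∀ y ∈ Iic a, height x = height y → x = y := fun x hx y hy hxy =>
    have hcomp := h x y a (.inl hx) (.inl hy)
    (le_of_height_le hcomp hxy.le).antisymm (le_of_height_le hcomp.symm hxy.ge)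
  have hcard : (Iic (height a)).ncard ≤ (Iic a).ncard := by
    rw [ncard_Iic_nat, ncard_Iic_eq_height_add_one]
  obtain ⟨d, hd, hdk⟩ := (surj_on_of_inj_on_of_ncard_le (s := Iic a) (t := Iic (height a))
    (fun x _ => height x) (fun _ hx => height_mono hx) (fun x y hx hy => hinj x hx y hy) hcard) k hk
  exact ⟨d, hd, hdk.symm⟩

theorem exists_isMax_ge (a : β) : ∃ m, IsMax m ∧ a ≤ m := by
  obtain ⟨m, ham, hm⟩ := Finite.exists_le_maximal (p := fun _ : β => True) (a := a) trivial
  exact ⟨m, maximal_true.1 hm, ham⟩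

noncomputable def chainMax (a : β) : β := (exists_isMax_ge a).choose

theorem isMax_chainMax (a : β) : IsMax (chainMax a) := (exists_isMax_ge a).choose_spec.1

theorem le_chainMax (a : β) : a ≤ chainMax a := (exists_isMax_ge a).choose_spec.2

theorem chainMax_eq_of_le (h : IsDisjointUnionOfChains β) {a m : β} (hm : IsMax m)
    (ham : a ≤ m) : chainMax a = m :=
  (h _ _ a (.inr (le_chainMax a)) (.inr ham)).elim (isMax_chainMax a).eq_of_le
    (hm.eq_of_le · |>.symm)

theorem chainMax_eq_chainMax (h : IsDisjointUnionOfChains β) {a b : β} (hab : a ≤ b) :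
    chainMax a = chainMax b :=
  chainMax_eq_of_le h (isMax_chainMax b) (hab.trans (le_chainMax b))

theorem le_iff_chainMax_eq_and_height_le (h : IsDisjointUnionOfChains β) {a b : β} :
    a ≤ b ↔ chainMax a = chainMax b ∧ height a ≤ height b :=
  ⟨fun hab => ⟨chainMax_eq_chainMax h hab, height_mono hab⟩, fun ⟨hmax, hh⟩ =>
    le_of_height_le (h a b (chainMax b) (.inl (hmax ▸ le_chainMax a)) (.inl (le_chainMax b))) hh⟩

theorem profile_le_of_orderEmbedding (h : IsDisjointUnionOfChains β) (e : γ ↪o β) :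
    profile γ ≤ profile β := fun k => by
  refine ncard_le_ncard_of_injOn (chainMax ∘ e) (fun m ⟨_, hk⟩ => ⟨isMax_chainMax _, ?_⟩) ?_
  · exact hk.trans ((height_le_height_of_orderEmbedding e m).trans (height_mono (le_chainMax _)))
  · intro m ⟨hm, _⟩ m' ⟨hm', _⟩ (hmm' : chainMax (e m) = chainMax (e m'))
    have hcomp := h (e m) (e m') (chainMax (e m')) (.inl (hmm' ▸ le_chainMax _))
      (.inl (le_chainMax _))
    exact hcomp.elim (fun hle => hm.eq_of_le (e.le_iff_le.1 hle))
      fun hle => (hm'.eq_of_le (e.le_iff_le.1 hle)).symm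

/-- Longer chains come first; ties are broken by an arbitrary injection into `ℕ`. -/
noncomputable def sortKey (m : β) : ℕᵒᵈ ×ₗ ℕ :=
  toLex (toDual (height m), (exists_injective_nat β).choose m)

theorem sortKey_injective : Function.Injective (sortKey : β → ℕᵒᵈ ×ₗ ℕ) := fun _ _ hmm' =>
  (exists_injective_nat β).choose_spec (Prod.mk.inj (toLex.injective hmm')).2

theorem sortKey_lt_of_height_lt {m m' : β} (hlt : height m < height m') :
    sortKey m' < sortKey m :=
  Prod.Lex.toLex_lt_toLex.2 (.inl (toDual_lt_toDual (α := ℕ) |>.2 hlt))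

noncomputable def chainIndex (m : β) : ℕ := {m' : β | IsMax m' ∧ sortKey m' < sortKey m}.ncard

theorem chainIndex_lt_chainIndex {m m' : β} (hm : IsMax m) (hlt : sortKey m < sortKey m') :
    chainIndex m < chainIndex m' := by
  have hsub : {x : β | IsMax x ∧ sortKey x < sortKey m} ⊆ {x | IsMax x ∧ sortKey x < sortKey m'} :=
    fun _ hx => ⟨hx.1, hx.2.trans hlt⟩
  exact ncard_lt_ncard (hsub.ssubset_of_mem_notMem ⟨hm, hlt⟩ fun hm => lt_irrefl _ hm.2)

theorem chainIndex_injOn : InjOn chainIndex {m : β | IsMax m} := fun m hm m' hm' he => by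
  rcases lt_trichotomy (sortKey m) (sortKey m') with hlt | heq | hlt
  · exact absurd he (chainIndex_lt_chainIndex hm hlt).ne
  · exact sortKey_injective heq
  · exact absurd he (chainIndex_lt_chainIndex hm' hlt).ne'

theorem chainIndex_lt_profile_iff {m : β} (hm : IsMax m) {k : ℕ} :
    chainIndex m < profile β k ↔ k ≤ height m := by
  unfold chainIndex profile
  constructor
  · intro hlt
    by_contra! hk
    exact hlt.not_ge <| ncard_le_ncard fun m' ⟨hm', hk'⟩ =>
      ⟨hm', sortKey_lt_of_height_lt (hk.trans_le hk')⟩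
  · intro hk
    have hsub : {x : β | IsMax x ∧ sortKey x < sortKey m} ⊆ {x | IsMax x ∧ k ≤ height x} :=
      fun _ ⟨hx, hlt⟩ => ⟨hx, hk.trans (not_lt.1 fun h => (sortKey_lt_of_height_lt h).asymm hlt)⟩
    exact ncard_lt_ncard (hsub.ssubset_of_mem_notMem ⟨hm, hk⟩ fun hm => lt_irrefl _ hm.2)

theorem exists_chainIndex_eq {i k : ℕ} (hi : i < profile β k) :
    ∃ m : β, IsMax m ∧ k ≤ height m ∧ chainIndex m = i := by
  obtain ⟨m, ⟨hm, hk⟩, hmi⟩ := (surj_on_of_inj_on_of_ncard_le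
    (s := {m : β | IsMax m ∧ k ≤ height m}) (t := Iio (profile β k)) (fun m _ => chainIndex m)
    (fun _ hm => (chainIndex_lt_profile_iff hm.1).2 hm.2)
    (fun _ _ hm hm' => chainIndex_injOn hm.1 hm'.1) (by rw [ncard_Iio_nat]; rfl)) i hi
  exact ⟨m, hm, hk, hmi.symm⟩

noncomputable def cell (a : β) : Σ _ : ℕ, ℕ := ⟨chainIndex (chainMax a), height a⟩

theorem cell_le_cell_iff (h : IsDisjointUnionOfChains β) {a b : β} : cell a ≤ cell b ↔ a ≤ b := by
  rw [le_iff_chainMax_eq_and_height_le h]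
  by_cases hmax : chainMax a = chainMax b
  · simp only [cell, hmax, Sigma.mk_le_mk_iff, true_and]
  · simp only [hmax, false_and, iff_false]
    exact fun hle => hmax (chainIndex_injOn (isMax_chainMax a) (isMax_chainMax b)
      (Sigma.le_def.1 hle).1)

noncomputable def cellEmbedding (h : IsDisjointUnionOfChains β) : β ↪o Σ _ : ℕ, ℕ :=
  OrderEmbedding.ofMapLEIff cell fun _ _ => cell_le_cell_iff h

theorem range_cellEmbedding (h : IsDisjointUnionOfChains β) :
    range (cellEmbedding h) = diagram (profile β) := by
  ext ⟨i, k⟩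
  constructor
  · rintro ⟨a, ha⟩
    rw [← ha]
    exact (chainIndex_lt_profile_iff (isMax_chainMax a)).2 (height_mono (le_chainMax a))
  · intro hi
    obtain ⟨m, hm, hk, rfl⟩ := exists_chainIndex_eq hi
    obtain ⟨d, hdm, rfl⟩ := exists_le_height_eq h hk
    refine ⟨d, ?_⟩
    rw [cellEmbedding, OrderEmbedding.coe_ofMapLEIff, cell, chainMax_eq_of_le h hm hdm]

noncomputable def orderIsoDiagram (h : IsDisjointUnionOfChains β) : β ≃o diagram (profile β) :=
  (cellEmbedding h).orderIso.trans (OrderIso.setCongr _ _ (range_cellEmbedding h))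

end ChainUnion

open ChainUnion

theorem finite_disjoint_union_of_chains_subrep (α : Type*) [PartialOrder α] [Finite α]
    (h : IsDisjointUnionOfChains α) : SubRepresentable α := by
  let e := cellEmbedding h
  have hsub (P : Set α) : diagram (profile P) ⊆ range e := range_cellEmbedding h ▸
    diagram_mono (profile_le_of_orderEmbedding h (OrderEmbedding.subtype (· ∈ P)))
  have iso (P : Set α) : P ≃o e ⁻¹' diagram (profile P) :=
    (orderIsoDiagram (h.subtype P)).trans (e.preimageOrderIso (hsub P)).symm
  refine ⟨fun P => e ⁻¹' diagram (profile P), fun P₁ P₂ => ⟨fun ⟨f⟩ => ?_, fun hs => ?_⟩,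
    fun P => ⟨⟨iso P⟩, ⟨(iso P).symm⟩⟩⟩
  · exact preimage_mono (diagram_mono (profile_le_of_orderEmbedding (h.subtype P₂) f))
  · exact ⟨(iso P₁).toOrderEmbedding.trans <|
      (OrderEmbedding.ofMapLEIff (inclusion hs) fun _ _ => Iff.rfl).trans (iso P₂).symm⟩
end

section
/- The integers ℤ with their usual linear order are not sub-representable. -/
/-!
For a witness `g`, the set `g (Ici 0)` order-embeds into the well-founded `Ici 0`, so it is well
founded and hence bounded below; dually `g (Iic 0)` is bounded above, so
`V = g (Ici 0) ∩ g (Iic 0)` is finite. But an interval `Icc 0 n` embeds into both `Ici 0` and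
`Iic 0` (the latter after a translation), so `g (Icc 0 n) ⊆ V`, and `Icc 0 n` embeds into
`g (Icc 0 n)`. Thus `V` has at least `n + 1` elements for every `n`.
-/

open Set

section LocallyFiniteOrder

variable {α : Type*} [LinearOrder α] [LocallyFiniteOrder α] {s t : Set α}

theorem BddBelow.of_orderEmbedding (e : s ↪o t) (ht : BddBelow t) : BddBelow s := by
  have : Nonempty α := ht.nonempty
  have : WellFoundedLT t := ⟨ht.wellFoundedOn_lt⟩
  have : WellFoundedLT s := e.wellFoundedLT
  rcases isEmpty_or_nonempty s with hs | hs
  · simp [isEmpty_coe_sort.mp hs]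
  · let := WellFoundedLT.toOrderBot s
    exact ⟨(⊥ : s), fun x hx => bot_le (a := (⟨x, hx⟩ : s))⟩

theorem BddAbove.of_orderEmbedding (e : s ↪o t) (ht : BddAbove t) : BddAbove s :=
  BddBelow.of_orderEmbedding (α := αᵒᵈ) e.dual ht

end LocallyFiniteOrder

def Set.inclusionOrderEmbedding {α : Type*} [Preorder α] {s t : Set α} (h : s ⊆ t) : s ↪o t :=
  Subrel.inclusionEmbedding (· ≤ ·) h

def Set.orderEmbeddingIccIic {α : Type*} [AddCommGroup α] [LinearOrder α]
    [IsOrderedAddMonoid α] (a b c : α) : Icc a b ↪o Iic c :=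
  (OrderIso.Icc (OrderIso.addRight (c - b)) a b).toOrderEmbedding.trans
    (inclusionOrderEmbedding (Icc_subset_Iic_self.trans (by simp)))

theorem Set.infinite_of_forall_Icc_embedding {β : Type*} {s : Set β}
    (h : ∀ n : ℕ, Nonempty (Icc (0 : ℤ) n ↪ s)) : s.Infinite := by
  intro hs
  have := hs.to_subtype
  obtain ⟨e⟩ := h (Nat.card s)
  simpa using Finite.card_le_of_embedding e

theorem int_not_subrep : ¬ SubRepresentable ℤ := by
  rintro ⟨g, hg_mono, hg_equiv⟩
  set V := g (Ici 0) ∩ g (Iic 0)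
  have hV_finite : V.Finite := by
    obtain ⟨e₁⟩ := (hg_equiv (Ici 0)).2
    obtain ⟨e₂⟩ := (hg_equiv (Iic 0)).2
    exact ((bddBelow_Ici.of_orderEmbedding e₁).mono inter_subset_left).finite_of_bddAbove
      ((bddAbove_Iic.of_orderEmbedding e₂).mono inter_subset_right)
  refine hV_finite.not_infinite (infinite_of_forall_Icc_embedding fun n => ?_)
  obtain ⟨e⟩ := (hg_equiv (Icc 0 n)).1
  have h₁ : g (Icc 0 n) ⊆ g (Ici 0) :=
    (hg_mono _ _).1 ⟨inclusionOrderEmbedding Icc_subset_Ici_self⟩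
  have h₂ : g (Icc 0 n) ⊆ g (Iic 0) := (hg_mono _ _).1 ⟨orderEmbeddingIccIic _ _ _⟩
  exact ⟨(e.trans (inclusionOrderEmbedding (subset_inter h₁ h₂))).toEmbedding⟩
end

section
/- The rationals ℚ with their usual order are not sub-representable. -/
/-!
Every countable ordinal is the order type of a subset `Sₐ` of `ℚ`, and for `a < b` the set `S_b`
does not embed into `Sₐ`. A map `g` witnessing sub-representability would therefore turn
`a ↦ g Sₐ` into a strictly increasing `ω₁`-chain of subsets of `ℚ`. Picking, for each `a`, an
element of `g S_{a+1} \ g Sₐ` gives an injection of `ω₁` into `ℚ`, which is impossible.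
-/

open Cardinal Order Set

universe u

theorem nonempty_Iio_orderEmbedding_iff {ι : Type*} [LinearOrder ι] [WellFoundedLT ι] {i j : ι} :
    Nonempty (Iio i ↪o Iio j) ↔ i ≤ j := by
  refine ⟨fun ⟨f⟩ => not_lt.mp fun hji => ?_, fun hij => ?_⟩
  · -- `f` followed by the inclusion is a strictly monotone self-map of `Iio i` moving `j` down.
    have hmono : StrictMono fun x => inclusion (Iio_subset_Iio hji.le) (f x) :=
      fun _ _ hxy => f.strictMono hxy
    exact (hmono.id_le ⟨j, hji⟩).not_gt (f ⟨j, hji⟩).2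
  · exact ⟨OrderEmbedding.ofStrictMono (inclusion (Iio_subset_Iio hij)) fun _ _ h => h⟩

theorem Cardinal.mk_le_of_strictMono_set {ι β : Type u} [LinearOrder ι] [SuccOrder ι]
    [NoMaxOrder ι] {f : ι → Set β} (hf : StrictMono f) : #ι ≤ #β := by
  have hnew : ∀ i, ∃ x ∈ f (succ i), x ∉ f i := fun i =>
    not_subset.mp (hf (lt_succ i)).not_ge
  choose x hx_mem hx_not_mem using hnew
  refine mk_le_of_injective (f := x) (.of_lt_imp_ne fun i j hij hx => ?_)
  exact hx_not_mem j (hx ▸ hf.monotone (succ_le_of_lt hij) (hx_mem i))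

theorem SubRepresentable.mk_le {α ι : Type u} [PartialOrder α] [LinearOrder ι] [WellFoundedLT ι]
    [SuccOrder ι] [NoMaxOrder ι] (hα : SubRepresentable α) (emb : ∀ i : ι, Nonempty (Iio i ↪o α)) :
    #ι ≤ #α := by
  obtain ⟨g, hg, -⟩ := hα
  let e i := (emb i).some
  let S i := range (e i)
  let iso i : Iio i ≃o S i := (e i).strictMono.orderIso
  have hS : ∀ i j, g (S i) ≤ g (S j) ↔ i ≤ j := fun i j => by
    rw [← hg, ← nonempty_Iio_orderEmbedding_iff]
    exact ⟨fun ⟨f⟩ => ⟨((iso i).toOrderEmbedding.trans f).trans (iso j).symm.toOrderEmbedding⟩,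
      fun ⟨f⟩ => ⟨((iso i).symm.toOrderEmbedding.trans f).trans (iso j).toOrderEmbedding⟩⟩
  exact mk_le_of_strictMono_set (OrderEmbedding.ofMapLEIff _ hS).strictMono

theorem rat_not_subrep : ¬ SubRepresentable ℚ := by
  intro h
  have : NoMaxOrder (ℵ₁ : Cardinal.{0}).ord.ToType := Cardinal.noMaxOrder (aleph0_le_aleph 1)
  have hcountable (i : (ℵ₁ : Cardinal.{0}).ord.ToType) : Countable (Iio i) :=
    mk_le_aleph0_iff.mp (lt_aleph_one_iff.mp (by simpa using mk_Iio_lt i (by simp)))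
  have hle : (ℵ₁ : Cardinal.{0}) ≤ ℵ₀ := by
    simpa using h.mk_le (ι := (ℵ₁ : Cardinal.{0}).ord.ToType) fun i =>
      Order.embedding_from_countable_to_dense (Iio i) ℚ
  exact aleph0_lt_aleph_one.not_ge hle
end

section
/- Every chain that is neither well-ordered (every nonempty subset has a least element) nor reverse well-ordered (every nonempty subset has a greatest element) is not sub-representable. -/
universe v

open Set

theorem wellFoundedLT_iff_forall_exists_le {α : Type*} [LinearOrder α] :
    WellFoundedLT α ↔ ∀ S : Set α, S.Nonempty → ∃ m ∈ S, ∀ s ∈ S, m ≤ s := by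
  simp only [isWellFounded_iff, WellFounded.wellFounded_iff_has_min, not_lt]

theorem wellFoundedGT_iff_forall_exists_ge {α : Type*} [LinearOrder α] :
    WellFoundedGT α ↔ ∀ S : Set α, S.Nonempty → ∃ m ∈ S, ∀ s ∈ S, s ≤ m :=
  wellFoundedLT_iff_forall_exists_le (α := αᵒᵈ)

theorem nonempty_natDual_orderEmbedding_of_not_wellFoundedLT {α : Type*} [LinearOrder α]
    (h : ¬ WellFoundedLT α) : Nonempty (ℕᵒᵈ ↪o α) := by
  rw [WellFoundedLT, isWellFounded_iff, RelEmbedding.wellFounded_iff_isEmpty,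
    not_isEmpty_iff] at h
  obtain ⟨f⟩ := h
  exact ⟨RelEmbedding.orderEmbeddingOfLTEmbedding f⟩

theorem nonempty_nat_orderEmbedding_of_not_wellFoundedGT {α : Type*} [LinearOrder α]
    (h : ¬ WellFoundedGT α) : Nonempty (ℕ ↪o α) := by
  obtain ⟨f⟩ := nonempty_natDual_orderEmbedding_of_not_wellFoundedLT (α := αᵒᵈ) h
  exact ⟨f.dual⟩

theorem SubRepresentable.exists_meet {α : Type*} [PartialOrder α] (h : SubRepresentable α)
    {γ δ : Type*} [Preorder γ] [Preorder δ] (eγ : γ ↪o α) (eδ : δ ↪o α) :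
    ∃ T : Set α, Nonempty (T ↪o γ) ∧ Nonempty (T ↪o δ) ∧
      ∀ (β : Type v) [Preorder β], Nonempty (β ↪o α) → Nonempty (β ↪o γ) →
        Nonempty (β ↪o δ) → Nonempty (β ↪o T) := by
  obtain ⟨g, hg, hgP⟩ := h
  refine ⟨g (range eγ) ∩ g (range eδ), ?_, ?_, ?_⟩
  · obtain ⟨f⟩ := (hgP _).2
    exact ⟨((Subrel.inclusionEmbedding (· ≤ ·) inter_subset_left).trans f).trans
      eγ.orderIso.symm⟩
  · obtain ⟨f⟩ := (hgP _).2
    exact ⟨((Subrel.inclusionEmbedding (· ≤ ·) inter_subset_right).trans f).trans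
      eδ.orderIso.symm⟩
  · rintro β _ ⟨e⟩ ⟨fγ⟩ ⟨fδ⟩
    have hγ : g (range e) ⊆ g (range eγ) :=
      (hg _ _).1 ⟨(e.orderIso.symm.toOrderEmbedding.trans fγ).trans eγ.orderIso⟩
    have hδ : g (range e) ⊆ g (range eδ) :=
      (hg _ _).1 ⟨(e.orderIso.symm.toOrderEmbedding.trans fδ).trans eδ.orderIso⟩
    obtain ⟨f⟩ := (hgP (range e)).1
    exact ⟨(e.orderIso.toOrderEmbedding.trans f).trans
      (Subrel.inclusionEmbedding (· ≤ ·) (subset_inter hγ hδ))⟩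

theorem chain_not_subrep (α : Type*) [LinearOrder α]
    (hwo : ¬ ∀ S : Set α, S.Nonempty → ∃ m ∈ S, ∀ s ∈ S, m ≤ s)
    (hwo' : ¬ ∀ S : Set α, S.Nonempty → ∃ m ∈ S, ∀ s ∈ S, s ≤ m) :
    ¬ SubRepresentable α := by
  intro hsub
  obtain ⟨down⟩ := nonempty_natDual_orderEmbedding_of_not_wellFoundedLT
    (mt wellFoundedLT_iff_forall_exists_le.1 hwo)
  obtain ⟨up⟩ := nonempty_nat_orderEmbedding_of_not_wellFoundedGT
    (mt wellFoundedGT_iff_forall_exists_ge.1 hwo')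
  obtain ⟨T, ⟨hTup⟩, ⟨hTdown⟩, hT⟩ := hsub.exists_meet up down
  have := hTup.wellFoundedLT
  have := hTdown.wellFoundedGT
  have := Finite.of_wellFoundedLT_wellFoundedGT T
  set n := Nat.card T + 1
  obtain ⟨e⟩ := hT (Fin n) ⟨(Fin.valOrderEmb n).trans up⟩ ⟨Fin.valOrderEmb n⟩
    ⟨Fin.revOrderIso.symm.toOrderEmbedding.trans (Fin.valOrderEmb n).dual⟩
  have := Finite.card_le_of_embedding e.toEmbedding
  simp [n] at this
end

section
/- Every reverse well-ordered set (every nonempty subset has a greatest element) is sub-representable. -/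
/-! In a well-ordered set, one subset embeds into another iff its order type is at most the
other's. Hence sending each subset to the initial segment of the same order type works: initial
segments are ordered by inclusion exactly as their order types are. Sub-representability passes
from `αᵒᵈ` to `α`, and a reverse well-order is the dual of a well-order. -/

open Ordinal OrderDual

universe u

theorem Ordinal.nonempty_orderEmbedding_iff_type_le {α β : Type u} [LinearOrder α]
    [WellFoundedLT α] [LinearOrder β] [WellFoundedLT β] :
    Nonempty (α ↪o β) ↔ typeLT α ≤ typeLT β := by
  rw [type_le_iff']
  exact ⟨fun ⟨f⟩ => ⟨f.ltEmbedding⟩, fun ⟨f⟩ => ⟨f.orderEmbeddingOfLTEmbedding⟩⟩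

/-- This is all of `α` when `typeLT α ≤ o`. -/
def initialSegOfType (α : Type u) [LinearOrder α] [WellFoundedLT α] (o : Ordinal) : Set α :=
  {x | typeLT (Set.Iio x) < o}

section WellOrder

variable {α : Type u} [LinearOrder α] [WellFoundedLT α]

theorem initialSegOfType_type_Iio (a : α) :
    initialSegOfType α (typeLT (Set.Iio a)) = Set.Iio a := by
  ext x
  simp [initialSegOfType]

theorem initialSegOfType_type : initialSegOfType α (typeLT α) = Set.univ := by
  ext x
  simp [initialSegOfType, typein_lt_type]

theorem type_initialSegOfType {o : Ordinal} (ho : o ≤ typeLT α) :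
    typeLT (initialSegOfType α o) = o := by
  rcases ho.lt_or_eq with ho | rfl
  · obtain ⟨a, rfl⟩ := typein_surj _ ho
    rw [← type_Iio_lt, initialSegOfType_type_Iio]
  · rw [initialSegOfType_type]
    exact OrderIso.Set.univ.ordinalType_congr

theorem initialSegOfType_subset_iff {o o' : Ordinal} (ho : o ≤ typeLT α) :
    initialSegOfType α o ⊆ initialSegOfType α o' ↔ o ≤ o' := by
  refine ⟨fun h => not_lt.1 fun ho' => ?_, fun h x hx => ?_⟩
  · obtain ⟨a, rfl⟩ := typein_surj _ (ho'.trans_le ho)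
    exact (show typeLT (Set.Iio a) < typeLT (Set.Iio a) from h ho').false
  · exact (show typeLT (Set.Iio x) < o from hx).trans_le h

theorem subRepresentable_of_wellFoundedLT : SubRepresentable α := by
  refine ⟨fun P => initialSegOfType α (typeLT P), fun P Q => ?_, fun P => ?_⟩
  · rw [nonempty_orderEmbedding_iff_type_le, initialSegOfType_subset_iff (type_set_le P)]
  · simp only [nonempty_orderEmbedding_iff_type_le, type_initialSegOfType (type_set_le P),
      le_rfl, and_self]

end WellOrder

section Dual

variable {α : Type*} [PartialOrder α]

def Set.preimageOfDualOrderIso (P : Set α) : ↥(ofDual ⁻¹' P) ≃o (↥P)ᵒᵈ where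
  toFun x := toDual ⟨ofDual x.1, x.2⟩
  invFun x := ⟨toDual (ofDual x).1, (ofDual x).2⟩
  left_inv _ := rfl
  right_inv _ := rfl
  map_rel_iff' := Iff.rfl

theorem nonempty_orderEmbedding_preimage_ofDual_iff (P Q : Set α) :
    Nonempty (↥(ofDual ⁻¹' P) ↪o ↥(ofDual ⁻¹' Q)) ↔ Nonempty (↥P ↪o ↥Q) := by
  refine ⟨fun ⟨f⟩ => ?_, fun ⟨f⟩ => ?_⟩
  · exact ⟨OrderEmbedding.dual <| (P.preimageOfDualOrderIso.symm.toOrderEmbedding.trans f).trans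
      Q.preimageOfDualOrderIso.toOrderEmbedding⟩
  · exact ⟨(P.preimageOfDualOrderIso.toOrderEmbedding.trans f.dual).trans
      Q.preimageOfDualOrderIso.symm.toOrderEmbedding⟩

theorem SubRepresentable.of_orderDual (h : SubRepresentable αᵒᵈ) : SubRepresentable α := by
  obtain ⟨g, hsub, hmut⟩ := h
  refine ⟨fun P => toDual ⁻¹' g (ofDual ⁻¹' P), fun P Q => ?_, fun P => ?_⟩
  · exact (nonempty_orderEmbedding_preimage_ofDual_iff P Q).symm.trans (hsub _ _)
  · obtain ⟨h₁, h₂⟩ := hmut (ofDual ⁻¹' P)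
    exact ⟨(nonempty_orderEmbedding_preimage_ofDual_iff _ _).1 h₁,
      (nonempty_orderEmbedding_preimage_ofDual_iff _ _).1 h₂⟩

end Dual

theorem reverseWellOrdered_subrep (α : Type*) [LinearOrder α]
    (hwo : ∀ S : Set α, S.Nonempty → ∃ m ∈ S, ∀ s ∈ S, s ≤ m) :
    SubRepresentable α := by
  have : WellFoundedGT α := ⟨WellFounded.wellFounded_iff_has_min.2 fun S hS => by
    obtain ⟨m, hm, hmax⟩ := hwo S hS
    exact ⟨m, hm, fun s hs => (hmax s hs).not_gt⟩⟩
  exact (subRepresentable_of_wellFoundedLT (α := αᵒᵈ)).of_orderDual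
end
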